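/- arXiv:2504.15557 — 4 statements merged into one kernel-verified Lean document; each statement's English description precedes it below -/
import Mathlib

section
/- Let F, G be distributions on ℝ such that a distribution F₀ ∈ 𝓢(γ) (convolution-equivalent class, γ ≥ 0) satisfies F̄(x) = o(F̄₀(x)) and Ḡ(x) = o(F̄₀(x)) as x → ∞. Then the convolution tail satisfies (F*G)̄(x) = o(F̄₀(x)) as x → ∞. -/
open MeasureTheory Filter Real Set Asymptotics

/-- Tail of a distribution (measure) on ℝ. -/
noncomputable def mtail (μ : Measure ℝ) (x : ℝ) : ℝ := (μ (Set.Ioi x)).toReal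

/-- The exponential-like-tailed class 𝓛(γ). -/
def memL (μ : Measure ℝ) (γ : ℝ) : Prop :=
  ∀ y : ℝ, Tendsto (fun x => mtail μ (x - y) / mtail μ x) atTop (nhds (Real.exp (γ * y)))

/-- V̂(γ) = ∫ e^{γ x} V(dx). -/
noncomputable def mgfAt (μ : Measure ℝ) (γ : ℝ) : ℝ := ∫ x, Real.exp (γ * x) ∂μ

/-- The convolution-equivalent class 𝓢(γ). -/
def memS (μ : Measure ℝ) (γ : ℝ) : Prop :=
  memL μ γ ∧
    Tendsto (fun x => mtail (Measure.conv μ μ) x / mtail μ x) atTop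
      (nhds (2 * mgfAt μ γ))

lemma mtail_nonneg (μ : Measure ℝ) (x : ℝ) : 0 ≤ mtail μ x := ENNReal.toReal_nonneg

/-- Convert a real tail bound to an `ℝ≥0∞` tail bound. -/
lemma tail_ennreal {F F0 : Measure ℝ} [IsFiniteMeasure F] [IsFiniteMeasure F0] {δ t : ℝ}
    (hδ : 0 ≤ δ) (h : mtail F t ≤ δ * mtail F0 t) :
    F (Set.Ioi t) ≤ ENNReal.ofReal δ * F0 (Set.Ioi t) := by
  calc F (Set.Ioi t) = ENNReal.ofReal (mtail F t) := by
        rw [mtail, ENNReal.ofReal_toReal (measure_ne_top _ _)]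
    _ ≤ ENNReal.ofReal (δ * mtail F0 t) := ENNReal.ofReal_le_ofReal h
    _ = ENNReal.ofReal δ * ENNReal.ofReal (mtail F0 t) := ENNReal.ofReal_mul hδ
    _ = ENNReal.ofReal δ * F0 (Set.Ioi t) := by
        rw [mtail, ENNReal.ofReal_toReal (measure_ne_top _ _)]

/-- The key convolution-tail inequality. -/
lemma conv_tail_bound (F G F0 : Measure ℝ) [IsProbabilityMeasure F] [IsProbabilityMeasure G]
    [IsProbabilityMeasure F0] (A δ : ℝ) (hδ : 0 ≤ δ)
    (hF : ∀ t, A ≤ t → mtail F t ≤ δ * mtail F0 t)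
    (hG : ∀ t, A ≤ t → mtail G t ≤ δ * mtail F0 t) (x : ℝ) :
    mtail (Measure.conv F G) x
      ≤ mtail F (x - A) + mtail G (x - A) + δ ^ 2 * mtail (Measure.conv F0 F0) x := by
  have hF' : ∀ t, A ≤ t → F (Set.Ioi t) ≤ ENNReal.ofReal δ * F0 (Set.Ioi t) :=
    fun t ht => tail_ennreal hδ (hF t ht)
  have hG' : ∀ t, A ≤ t → G (Set.Ioi t) ≤ ENNReal.ofReal δ * F0 (Set.Ioi t) :=
    fun t ht => tail_ennreal hδ (hG t ht)
  set S : Set (ℝ × ℝ) := {p : ℝ × ℝ | A < p.1 ∧ A < p.2 ∧ x < p.1 + p.2} with hSdef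
  have hSm : MeasurableSet S := by
    apply MeasurableSet.inter (measurableSet_lt measurable_const measurable_fst)
    exact MeasurableSet.inter (measurableSet_lt measurable_const measurable_snd)
      (measurableSet_lt measurable_const (measurable_fst.add measurable_snd))
  have hTm : MeasurableSet {p : ℝ × ℝ | x < p.1 + p.2} :=
    measurableSet_lt measurable_const (measurable_fst.add measurable_snd)
  -- conv tail as product measure
  have hconv : ∀ (μ ν : Measure ℝ) [IsProbabilityMeasure μ] [IsProbabilityMeasure ν],
      Measure.conv μ ν (Set.Ioi x) = (μ.prod ν) {p : ℝ × ℝ | x < p.1 + p.2} := by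
    intro μ ν _ _
    rw [Measure.conv, Measure.map_apply (by fun_prop) measurableSet_Ioi]
    rfl
  -- slices of S
  have hslice2 : ∀ a : ℝ, Prod.mk a ⁻¹' S = if A < a then Set.Ioi (max A (x - a)) else ∅ := by
    intro a
    by_cases h : A < a
    · rw [if_pos h]
      ext b
      constructor
      · rintro ⟨-, hb, hx⟩
        exact max_lt hb (by linarith)
      · intro hb
        obtain ⟨hb1, hb2⟩ := max_lt_iff.1 (Set.mem_Ioi.1 hb)
        exact ⟨h, hb1, by linarith⟩
    · rw [if_neg h]
      ext b
      constructor
      · rintro ⟨ha, -⟩; exact absurd ha h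
      · intro hb; exact absurd hb (Set.notMem_empty b)
  have hslice1 : ∀ b : ℝ, (fun a => (a, b)) ⁻¹' S = if A < b then Set.Ioi (max A (x - b)) else ∅ := by
    intro b
    by_cases h : A < b
    · rw [if_pos h]
      ext a
      constructor
      · rintro ⟨ha, -, hx⟩
        exact max_lt ha (by linarith)
      · intro ha
        obtain ⟨ha1, ha2⟩ := max_lt_iff.1 (Set.mem_Ioi.1 ha)
        exact ⟨ha1, h, by linarith⟩
    · rw [if_neg h]
      ext a
      constructor
      · rintro ⟨-, hb, -⟩; exact absurd hb h
      · intro ha; exact absurd ha (Set.notMem_empty a)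
  -- middle term bound, step 1 (second coordinate)
  have hmid1 : (F.prod G) S ≤ ENNReal.ofReal δ * (F.prod F0) S := by
    rw [Measure.prod_apply hSm, Measure.prod_apply hSm]
    rw [← MeasureTheory.lintegral_const_mul' _ _ ENNReal.ofReal_ne_top]
    apply lintegral_mono
    intro a
    show G (Prod.mk a ⁻¹' S) ≤ ENNReal.ofReal δ * F0 (Prod.mk a ⁻¹' S)
    rw [hslice2 a]
    by_cases h : A < a
    · rw [if_pos h]
      exact hG' _ (le_max_left _ _)
    · rw [if_neg h]; simp
  -- middle term bound, step 2 (first coordinate)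
  have hmid2 : (F.prod F0) S ≤ ENNReal.ofReal δ * (F0.prod F0) S := by
    rw [Measure.prod_apply_symm hSm, Measure.prod_apply_symm hSm]
    rw [← MeasureTheory.lintegral_const_mul' _ _ ENNReal.ofReal_ne_top]
    apply lintegral_mono
    intro b
    show F ((fun a => (a, b)) ⁻¹' S) ≤ ENNReal.ofReal δ * F0 ((fun a => (a, b)) ⁻¹' S)
    rw [hslice1 b]
    by_cases h : A < b
    · rw [if_pos h]
      exact hF' _ (le_max_left _ _)
    · rw [if_neg h]; simp
  have hmid3 : (F0.prod F0) S ≤ Measure.conv F0 F0 (Set.Ioi x) := by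
    rw [hconv F0 F0]
    exact measure_mono (fun p hp => hp.2.2)
  -- the splitting inclusion
  have hincl : {p : ℝ × ℝ | x < p.1 + p.2} ⊆
      (Set.Ioi (x - A) ×ˢ Set.univ) ∪ (Set.univ ×ˢ Set.Ioi (x - A)) ∪ S := by
    rintro ⟨a, b⟩ hp
    simp only [Set.mem_setOf_eq] at hp
    by_cases h1 : x - A < a
    · exact Or.inl (Or.inl ⟨h1, trivial⟩)
    · by_cases h2 : x - A < b
      · exact Or.inl (Or.inr ⟨trivial, h2⟩)
      · push_neg at h1 h2
        exact Or.inr ⟨by linarith, by linarith, hp⟩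
  -- main ℝ≥0∞ bound
  have hmain : Measure.conv F G (Set.Ioi x) ≤
      F (Set.Ioi (x - A)) + G (Set.Ioi (x - A)) +
        ENNReal.ofReal δ * (ENNReal.ofReal δ * Measure.conv F0 F0 (Set.Ioi x)) := by
    rw [hconv F G]
    calc (F.prod G) {p : ℝ × ℝ | x < p.1 + p.2}
        ≤ (F.prod G) ((Set.Ioi (x - A) ×ˢ Set.univ) ∪ (Set.univ ×ˢ Set.Ioi (x - A)) ∪ S) :=
          measure_mono hincl
      _ ≤ (F.prod G) (Set.Ioi (x - A) ×ˢ Set.univ) + (F.prod G) (Set.univ ×ˢ Set.Ioi (x - A)) +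
            (F.prod G) S :=
          (measure_union_le _ _).trans (add_le_add_left (measure_union_le _ _) _)
      _ ≤ F (Set.Ioi (x - A)) + G (Set.Ioi (x - A)) +
            ENNReal.ofReal δ * (ENNReal.ofReal δ * Measure.conv F0 F0 (Set.Ioi x)) := by
          gcongr
          · rw [Measure.prod_prod, measure_univ, mul_one]
          · rw [Measure.prod_prod, measure_univ, one_mul]
          · exact hmid1.trans ((mul_le_mul_right (hmid2.trans
              (mul_le_mul_right hmid3 _)) _))
  -- pass to reals
  have hfin : F (Set.Ioi (x - A)) + G (Set.Ioi (x - A)) +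
      ENNReal.ofReal δ * (ENNReal.ofReal δ * Measure.conv F0 F0 (Set.Ioi x)) ≠ ⊤ := by
    apply ENNReal.add_ne_top.2
    constructor
    · exact ENNReal.add_ne_top.2 ⟨measure_ne_top _ _, measure_ne_top _ _⟩
    · exact ENNReal.mul_ne_top ENNReal.ofReal_ne_top
        (ENNReal.mul_ne_top ENNReal.ofReal_ne_top (measure_ne_top _ _))
  calc mtail (Measure.conv F G) x
      ≤ (F (Set.Ioi (x - A)) + G (Set.Ioi (x - A)) +
          ENNReal.ofReal δ * (ENNReal.ofReal δ * Measure.conv F0 F0 (Set.Ioi x))).toReal :=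
        ENNReal.toReal_mono hfin hmain
    _ = mtail F (x - A) + mtail G (x - A) + δ * (δ * mtail (Measure.conv F0 F0) x) := by
        rw [ENNReal.toReal_add (ENNReal.add_ne_top.2 ⟨measure_ne_top _ _, measure_ne_top _ _⟩)
          (ENNReal.mul_ne_top ENNReal.ofReal_ne_top
            (ENNReal.mul_ne_top ENNReal.ofReal_ne_top (measure_ne_top _ _))),
          ENNReal.toReal_add (measure_ne_top _ _) (measure_ne_top _ _),
          ENNReal.toReal_mul, ENNReal.toReal_mul, ENNReal.toReal_ofReal hδ]
        rfl
    _ = mtail F (x - A) + mtail G (x - A) + δ ^ 2 * mtail (Measure.conv F0 F0) x := by ring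

theorem stmt3 (F G F0 : Measure ℝ) [IsProbabilityMeasure F] [IsProbabilityMeasure G]
    [IsProbabilityMeasure F0] (γ : ℝ) (hγ : 0 ≤ γ) (hS : memS F0 γ)
    (hF : (fun x => mtail F x) =o[atTop] fun x => mtail F0 x)
    (hG : (fun x => mtail G x) =o[atTop] fun x => mtail F0 x) :
    (fun x => mtail (Measure.conv F G) x) =o[atTop] fun x => mtail F0 x := by
  obtain ⟨hL, hconv⟩ := hS
  rw [Asymptotics.isLittleO_iff]
  intro c hc
  set L : ℝ := 2 * mgfAt F0 γ with hLdef
  have hL0 : 0 ≤ L :=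
    ge_of_tendsto' hconv fun x => div_nonneg ENNReal.toReal_nonneg ENNReal.toReal_nonneg
  have hL1 : 0 < L + 1 := by linarith
  -- eventual positivity of mtail F0
  have hpos : ∀ᶠ x in atTop, 0 < mtail F0 x := by
    have h2 : ∀ᶠ x in atTop, Real.exp (γ * 1) / 2 < mtail F0 (x - 1) / mtail F0 x :=
      (hL 1).eventually_const_lt (half_lt_self (Real.exp_pos _))
    filter_upwards [h2] with x hx
    rcases lt_or_eq_of_le (mtail_nonneg F0 x) with h | h
    · exact h
    · rw [← h, div_zero] at hx
      exact absurd hx (not_lt.2 (by positivity))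
  -- choose δ
  set δ : ℝ := Real.sqrt (c / (2 * (L + 1))) with hδdef
  have hδpos : 0 < δ := Real.sqrt_pos.2 (by positivity)
  have hδsq : δ ^ 2 = c / (2 * (L + 1)) := Real.sq_sqrt (by positivity)
  -- thresholds for δ-tail bounds
  obtain ⟨A1, hA1⟩ := eventually_atTop.1 (hF.def hδpos)
  obtain ⟨A2, hA2⟩ := eventually_atTop.1 (hG.def hδpos)
  set A : ℝ := max A1 A2 with hAdef
  have hFA : ∀ t, A ≤ t → mtail F t ≤ δ * mtail F0 t := by
    intro t ht
    have := hA1 t ((le_max_left A1 A2).trans ht)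
    rw [Real.norm_eq_abs, Real.norm_eq_abs, abs_of_nonneg (mtail_nonneg _ _),
      abs_of_nonneg (mtail_nonneg _ _)] at this
    exact this
  have hGA : ∀ t, A ≤ t → mtail G t ≤ δ * mtail F0 t := by
    intro t ht
    have := hA2 t ((le_max_right A1 A2).trans ht)
    rw [Real.norm_eq_abs, Real.norm_eq_abs, abs_of_nonneg (mtail_nonneg _ _),
      abs_of_nonneg (mtail_nonneg _ _)] at this
    exact this
  have key : ∀ x, mtail (Measure.conv F G) x
      ≤ mtail F (x - A) + mtail G (x - A) + δ ^ 2 * mtail (Measure.conv F0 F0) x :=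
    conv_tail_bound F G F0 A δ hδpos.le hFA hGA
  -- constants
  set K : ℝ := Real.exp (γ * A) + 1 with hKdef
  have hKpos : 0 < K := by positivity
  set η : ℝ := c / (4 * K) with hηdef
  have hηpos : 0 < η := by positivity
  -- eventual bounds
  have hK : ∀ᶠ x in atTop, mtail F0 (x - A) ≤ K * mtail F0 x := by
    have h2 : ∀ᶠ x in atTop, mtail F0 (x - A) / mtail F0 x < K :=
      (hL A).eventually_lt_const (by rw [hKdef]; linarith)
    filter_upwards [h2, hpos] with x hx hp
    exact le_of_lt ((div_lt_iff₀ hp).1 hx)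
  have hC : ∀ᶠ x in atTop, mtail (Measure.conv F0 F0) x ≤ (L + 1) * mtail F0 x := by
    have h2 : ∀ᶠ x in atTop, mtail (Measure.conv F0 F0) x / mtail F0 x < L + 1 :=
      hconv.eventually_lt_const (by linarith)
    filter_upwards [h2, hpos] with x hx hp
    exact le_of_lt ((div_lt_iff₀ hp).1 hx)
  obtain ⟨B1, hB1⟩ := eventually_atTop.1 (hF.def hηpos)
  obtain ⟨B2, hB2⟩ := eventually_atTop.1 (hG.def hηpos)
  -- combine
  filter_upwards [hK, hC, hpos, eventually_ge_atTop (B1 + A), eventually_ge_atTop (B2 + A)]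
    with x h1 h2 h3 h4 h5
  have hxF : mtail F (x - A) ≤ η * mtail F0 (x - A) := by
    have := hB1 (x - A) (by linarith)
    rw [Real.norm_eq_abs, Real.norm_eq_abs, abs_of_nonneg (mtail_nonneg _ _),
      abs_of_nonneg (mtail_nonneg _ _)] at this
    exact this
  have hxG : mtail G (x - A) ≤ η * mtail F0 (x - A) := by
    have := hB2 (x - A) (by linarith)
    rw [Real.norm_eq_abs, Real.norm_eq_abs, abs_of_nonneg (mtail_nonneg _ _),
      abs_of_nonneg (mtail_nonneg _ _)] at this
    exact this
  have hb1 : mtail F (x - A) ≤ η * (K * mtail F0 x) :=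
    hxF.trans (mul_le_mul_of_nonneg_left h1 hηpos.le)
  have hb2 : mtail G (x - A) ≤ η * (K * mtail F0 x) :=
    hxG.trans (mul_le_mul_of_nonneg_left h1 hηpos.le)
  have hb3 : δ ^ 2 * mtail (Measure.conv F0 F0) x ≤ δ ^ 2 * ((L + 1) * mtail F0 x) :=
    mul_le_mul_of_nonneg_left h2 (sq_nonneg _)
  have heq1 : η * K = c / 4 := by
    rw [hηdef]; field_simp
  have heq2 : δ ^ 2 * (L + 1) = c / 2 := by
    rw [hδsq]; field_simp
  rw [Real.norm_eq_abs, Real.norm_eq_abs, abs_of_nonneg (mtail_nonneg _ _),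
    abs_of_nonneg (mtail_nonneg _ _)]
  have hkx := key x
  have hb1' : η * (K * mtail F0 x) = c / 4 * mtail F0 x := by rw [← heq1]; ring
  have hb3' : δ ^ 2 * ((L + 1) * mtail F0 x) = c / 2 * mtail F0 x := by rw [← heq2]; ring
  have hc1 : mtail F (x - A) ≤ c / 4 * mtail F0 x := hb1.trans_eq hb1'
  have hc2 : mtail G (x - A) ≤ c / 4 * mtail F0 x := hb2.trans_eq hb1'
  have hc3 : δ ^ 2 * mtail (Measure.conv F0 F0) x ≤ c / 2 * mtail F0 x := hb3.trans_eq hb3'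
  calc mtail (Measure.conv F G) x
      ≤ mtail F (x - A) + mtail G (x - A) + δ ^ 2 * mtail (Measure.conv F0 F0) x := hkx
    _ ≤ c / 4 * mtail F0 x + c / 4 * mtail F0 x + c / 2 * mtail F0 x :=
        add_le_add (add_le_add hc1 hc2) hc3
    _ = c * mtail F0 x := by ring
end

section
/- Let F, F₁, F₂ be distributions on ℝ with F ∈ 𝓢(γ), γ ≥ 0, and suppose the limits lᵢ = lim_{x→∞} F̄ᵢ(x)/F̄(x) exist (finite, possibly zero) for i = 1, 2. Then lim_{x→∞} (F₁*F₂)̄(x)/F̄(x) = l₁ F̂₂(γ) + l₂ F̂₁(γ), where F̂ᵢ(γ) = ∫ e^{γx} Fᵢ(dx). -/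
open MeasureTheory Filter Real Set Asymptotics

section helpers

lemma mtail_anti (μ : Measure ℝ) [IsFiniteMeasure μ] : Antitone (mtail μ) := by
  intro a b hab
  exact ENNReal.toReal_mono (measure_ne_top μ _) (measure_mono (Set.Ioi_subset_Ioi hab))

lemma mtail_le_one (μ : Measure ℝ) [IsProbabilityMeasure μ] (x : ℝ) : mtail μ x ≤ 1 := by
  have : μ (Set.Ioi x) ≤ 1 := prob_le_one
  simpa [mtail] using ENNReal.toReal_mono (by simp) this

lemma mtail_pos {F : Measure ℝ} [IsProbabilityMeasure F] {γ : ℝ} (hL : memL F γ) (x : ℝ) :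
    0 < mtail F x := by
  rcases lt_or_eq_of_le (mtail_nonneg F x) with h | h
  · exact h
  · exfalso
    have hz : ∀ z ≥ x, mtail F z = 0 := fun z hz =>
      le_antisymm (h ▸ mtail_anti F hz) (mtail_nonneg F z)
    have h0 : Tendsto (fun z => mtail F (z - 0) / mtail F z) atTop (nhds 0) := by
      apply Tendsto.congr' _ tendsto_const_nhds
      filter_upwards [eventually_ge_atTop x] with z hzx
      simp [hz z hzx]
    have := tendsto_nhds_unique h0 (hL 0)
    simp at this

lemma ratio_limit_nonneg {G F : Measure ℝ} {l : ℝ}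
    (h : Tendsto (fun x => mtail G x / mtail F x) atTop (nhds l)) : 0 ≤ l :=
  le_of_tendsto_of_tendsto' tendsto_const_nhds h
    (fun x => div_nonneg (mtail_nonneg G x) (mtail_nonneg F x))

lemma global_bound {G F : Measure ℝ} [IsProbabilityMeasure G] [IsProbabilityMeasure F]
    {γ l : ℝ} (hL : memL F γ)
    (h : Tendsto (fun x => mtail G x / mtail F x) atTop (nhds l)) :
    ∃ C : ℝ, 1 ≤ C ∧ ∀ x, mtail G x ≤ C * mtail F x := by
  have hev : ∀ᶠ x in atTop, mtail G x / mtail F x < l + 1 :=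
    h.eventually (eventually_lt_nhds (lt_add_one l))
  rcases eventually_atTop.1 hev with ⟨x0, hx0⟩
  have hb : ∀ x ≥ x0, mtail G x ≤ (l+1) * mtail F x := by
    intro x hx
    have := (hx0 x hx).le
    rwa [div_le_iff₀ (mtail_pos hL x)] at this
  refine ⟨max 1 (max (l+1) (1 / mtail F x0)), le_max_left _ _, fun x => ?_⟩
  rcases le_or_gt x0 x with hx | hx
  · exact (hb x hx).trans (mul_le_mul_of_nonneg_right
      ((le_max_left _ _).trans (le_max_right _ _)) (mtail_nonneg F x))
  · have h1 : mtail G x ≤ 1 := mtail_le_one G x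
    have hp := mtail_pos hL x0
    have h2 : (1 / mtail F x0) * mtail F x0 = 1 := by
      field_simp
    have h3 : mtail F x0 ≤ mtail F x := mtail_anti F hx.le
    calc mtail G x ≤ 1 := h1
      _ = (1 / mtail F x0) * mtail F x0 := h2.symm
      _ ≤ (1 / mtail F x0) * mtail F x := by
          apply mul_le_mul_of_nonneg_left h3
          positivity
      _ ≤ max 1 (max (l+1) (1 / mtail F x0)) * mtail F x := by
          apply mul_le_mul_of_nonneg_right
            ((le_max_right _ _).trans (le_max_right _ _)) (mtail_nonneg F x)

end helpers

section part2

lemma global_bound_ennreal {G F : Measure ℝ} [IsProbabilityMeasure G] [IsProbabilityMeasure F]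
    {C : ℝ} (hC : 1 ≤ C) (hb : ∀ x, mtail G x ≤ C * mtail F x) (x : ℝ) :
    G (Set.Ioi x) ≤ ENNReal.ofReal C * F (Set.Ioi x) := by
  have h1 : G (Set.Ioi x) = ENNReal.ofReal (mtail G x) := by
    simp [mtail, ENNReal.ofReal_toReal (measure_ne_top G _)]
  have h2 : F (Set.Ioi x) = ENNReal.ofReal (mtail F x) := by
    simp [mtail, ENNReal.ofReal_toReal (measure_ne_top F _)]
  rw [h1, h2, ← ENNReal.ofReal_mul (by linarith)]
  exact ENNReal.ofReal_le_ofReal (hb x)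

lemma conv_Ioi (μ ν : Measure ℝ) [SFinite μ] [SFinite ν] (x : ℝ) :
    Measure.conv μ ν (Set.Ioi x) = (μ.prod ν) {p : ℝ × ℝ | x < p.1 + p.2} := by
  show Measure.map (fun p : ℝ × ℝ => p.1 + p.2) (μ.prod ν) _ = _
  rw [Measure.map_apply (by fun_prop) measurableSet_Ioi]
  rfl

lemma meas_sum_set (x : ℝ) : MeasurableSet {p : ℝ × ℝ | x < p.1 + p.2} :=
  measurableSet_lt measurable_const (measurable_fst.add measurable_snd)

lemma slice_fst (μ ν : Measure ℝ) [SFinite ν] (x T : ℝ) :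
    (μ.prod ν) {p : ℝ × ℝ | x < p.1 + p.2 ∧ p.1 ∈ Set.Iic T}
      = ∫⁻ u in Set.Iic T, ν (Set.Ioi (x - u)) ∂μ := by
  rw [Measure.prod_apply (show MeasurableSet {p : ℝ × ℝ | x < p.1 + p.2 ∧ p.1 ∈ Set.Iic T} from
    (meas_sum_set x).inter (measurableSet_Iic.preimage measurable_fst))]
  rw [← lintegral_indicator measurableSet_Iic]
  congr 1
  ext u
  rcases le_or_gt u T with h | h
  · rw [Set.indicator_of_mem (show u ∈ Set.Iic T from h)]
    congr 1
    ext v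
    simp only [Set.mem_Ioi, Set.mem_preimage, Set.mem_setOf_eq, Set.mem_Iic]
    constructor
    · rintro ⟨hv, -⟩; linarith
    · intro hv; exact ⟨by linarith, h⟩
  · rw [Set.indicator_of_notMem (show u ∉ Set.Iic T by simpa using h.not_ge)]
    have he : Prod.mk u ⁻¹' {p : ℝ × ℝ | x < p.1 + p.2 ∧ p.1 ∈ Set.Iic T} = ∅ := by
      ext v
      simp only [Set.mem_preimage, Set.mem_setOf_eq, Set.mem_Iic,
        Set.mem_empty_iff_false, iff_false, not_and]
      intro _
      exact h.not_ge
    rw [he, measure_empty]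

end part2

section part3

lemma slice_snd (μ ν : Measure ℝ) [SFinite μ] [SFinite ν] (x T : ℝ) :
    (μ.prod ν) {p : ℝ × ℝ | x < p.1 + p.2 ∧ p.2 ∈ Set.Iic T}
      = ∫⁻ v in Set.Iic T, μ (Set.Ioi (x - v)) ∂ν := by
  rw [Measure.prod_apply_symm (show MeasurableSet {p : ℝ × ℝ | x < p.1 + p.2 ∧ p.2 ∈ Set.Iic T} from
    (meas_sum_set x).inter (measurableSet_Iic.preimage measurable_snd))]
  rw [← lintegral_indicator measurableSet_Iic]
  congr 1
  ext v
  rcases le_or_gt v T with h | h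
  · rw [Set.indicator_of_mem (show v ∈ Set.Iic T from h)]
    congr 1
    ext u
    simp only [Set.mem_Ioi, Set.mem_preimage, Set.mem_setOf_eq, Set.mem_Iic]
    constructor
    · rintro ⟨hv, -⟩; linarith
    · intro hv; exact ⟨by linarith, h⟩
  · rw [Set.indicator_of_notMem (show v ∉ Set.Iic T by simpa using h.not_ge)]
    have he : (fun u => (u, v)) ⁻¹' {p : ℝ × ℝ | x < p.1 + p.2 ∧ p.2 ∈ Set.Iic T} = ∅ := by
      ext u
      simp only [Set.mem_preimage, Set.mem_setOf_eq, Set.mem_Iic,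
        Set.mem_empty_iff_false, iff_false, not_and]
      intro _
      exact h.not_ge
    rw [he, measure_empty]

lemma slice_top (μ ν : Measure ℝ) [SFinite μ] [SFinite ν] [IsFiniteMeasure ν] (x T : ℝ) :
    (μ.prod ν) {p : ℝ × ℝ | x < p.1 + p.2 ∧ x - T < p.1}
      = (∫⁻ v in Set.Iic T, μ (Set.Ioi (x - v)) ∂ν) + μ (Set.Ioi (x - T)) * ν (Set.Ioi T) := by
  rw [Measure.prod_apply_symm (show MeasurableSet {p : ℝ × ℝ | x < p.1 + p.2 ∧ x - T < p.1} from
    (meas_sum_set x).inter (measurableSet_Ioi.preimage measurable_fst))]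
  have hfun : ∀ v : ℝ, μ ((fun u => (u, v)) ⁻¹' {p : ℝ × ℝ | x < p.1 + p.2 ∧ x - T < p.1})
      = if v ≤ T then μ (Set.Ioi (x - v)) else μ (Set.Ioi (x - T)) := by
    intro v
    split_ifs with h
    · congr 1
      ext u
      simp only [Set.mem_preimage, Set.mem_setOf_eq, Set.mem_Ioi]
      constructor
      · rintro ⟨hv, -⟩; linarith
      · intro hv; exact ⟨by linarith, by linarith⟩
    · push_neg at h
      congr 1
      ext u
      simp only [Set.mem_preimage, Set.mem_setOf_eq, Set.mem_Ioi]
      constructor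
      · rintro ⟨-, hv⟩; linarith
      · intro hv; exact ⟨by linarith, hv⟩
  rw [lintegral_congr hfun, ← lintegral_add_compl _ (measurableSet_Iic (a := T))]
  congr 1
  · apply setLIntegral_congr_fun measurableSet_Iic
    intro v hv
    dsimp only
    rw [if_pos (Set.mem_Iic.1 hv)]
  · rw [show (Set.Iic T)ᶜ = Set.Ioi T from Set.compl_Iic]
    have hcg : ∀ᵐ v ∂(ν.restrict (Set.Ioi T)),
        (if v ≤ T then μ (Set.Ioi (x - v)) else μ (Set.Ioi (x - T))) = μ (Set.Ioi (x - T)) := by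
      filter_upwards [ae_restrict_mem measurableSet_Ioi] with v hv
      rw [if_neg (not_le.2 (Set.mem_Ioi.1 hv))]
    rw [lintegral_congr_ae hcg, setLIntegral_const, mul_comm]

end part3

section part4

lemma mid_slice_fst (μ ν : Measure ℝ) [SFinite ν] (x T : ℝ) :
    (μ.prod ν) {p : ℝ × ℝ | x < p.1 + p.2 ∧ T < p.1 ∧ p.1 ≤ x - T}
      = ∫⁻ u in Set.Ioc T (x - T), ν (Set.Ioi (x - u)) ∂μ := by
  rw [Measure.prod_apply (show MeasurableSet {p : ℝ × ℝ | x < p.1 + p.2 ∧ T < p.1 ∧ p.1 ≤ x - T}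
    from (meas_sum_set x).inter
      ((measurableSet_Ioc.preimage measurable_fst : MeasurableSet (Prod.fst ⁻¹' Set.Ioc T (x-T)))))]
  rw [← lintegral_indicator measurableSet_Ioc]
  congr 1
  ext u
  by_cases h : u ∈ Set.Ioc T (x - T)
  · rw [Set.indicator_of_mem h]
    obtain ⟨h1, h2⟩ := h
    congr 1
    ext v
    simp only [Set.mem_Ioi, Set.mem_preimage, Set.mem_setOf_eq]
    constructor
    · rintro ⟨hv, -, -⟩; linarith
    · intro hv; exact ⟨by linarith, h1, h2⟩
  · rw [Set.indicator_of_notMem h]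
    have he : Prod.mk u ⁻¹' {p : ℝ × ℝ | x < p.1 + p.2 ∧ T < p.1 ∧ p.1 ≤ x - T} = ∅ := by
      ext v
      simp only [Set.mem_preimage, Set.mem_setOf_eq, Set.mem_empty_iff_false, iff_false, not_and]
      intro _ h1 h2
      exact h ⟨h1, h2⟩
    rw [he, measure_empty]

lemma mid_slice_snd (μ ν : Measure ℝ) [SFinite μ] [SFinite ν] (x T : ℝ) :
    (μ.prod ν) {p : ℝ × ℝ | x < p.1 + p.2 ∧ T < p.2 ∧ p.2 ≤ x - T}
      = ∫⁻ v in Set.Ioc T (x - T), μ (Set.Ioi (x - v)) ∂ν := by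
  rw [Measure.prod_apply_symm (show MeasurableSet {p : ℝ × ℝ | x < p.1 + p.2 ∧ T < p.2 ∧ p.2 ≤ x - T}
    from (meas_sum_set x).inter
      ((measurableSet_Ioc.preimage measurable_snd : MeasurableSet (Prod.snd ⁻¹' Set.Ioc T (x-T)))))]
  rw [← lintegral_indicator measurableSet_Ioc]
  congr 1
  ext v
  by_cases h : v ∈ Set.Ioc T (x - T)
  · rw [Set.indicator_of_mem h]
    obtain ⟨h1, h2⟩ := h
    congr 1
    ext u
    simp only [Set.mem_Ioi, Set.mem_preimage, Set.mem_setOf_eq]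
    constructor
    · rintro ⟨hv, -, -⟩; linarith
    · intro hv; exact ⟨by linarith, h1, h2⟩
  · rw [Set.indicator_of_notMem h]
    have he : (fun u => (u, v)) ⁻¹' {p : ℝ × ℝ | x < p.1 + p.2 ∧ T < p.2 ∧ p.2 ≤ x - T} = ∅ := by
      ext u
      simp only [Set.mem_preimage, Set.mem_setOf_eq, Set.mem_empty_iff_false, iff_false, not_and]
      intro _ h1 h2
      exact h ⟨h1, h2⟩
    rw [he, measure_empty]

lemma mid_snd_bound (μ ν : Measure ℝ) [SFinite μ] [SFinite ν] (x T : ℝ) :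
    (μ.prod ν) {p : ℝ × ℝ | x < p.1 + p.2 ∧ T < p.1 ∧ p.1 ≤ x - T}
      ≤ ∫⁻ v in Set.Ioi T, μ (Set.Ioi (max (x - v) T)) ∂ν := by
  rw [Measure.prod_apply_symm (show MeasurableSet {p : ℝ × ℝ | x < p.1 + p.2 ∧ T < p.1 ∧ p.1 ≤ x - T}
    from (meas_sum_set x).inter
      ((measurableSet_Ioc.preimage measurable_fst : MeasurableSet (Prod.fst ⁻¹' Set.Ioc T (x-T)))))]
  rw [← lintegral_indicator measurableSet_Ioi]
  apply lintegral_mono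
  intro v
  by_cases h : v ∈ Set.Ioi T
  · rw [Set.indicator_of_mem h]
    apply measure_mono
    intro u hu
    simp only [Set.mem_preimage, Set.mem_setOf_eq] at hu
    obtain ⟨h1, h2, h3⟩ := hu
    exact Set.mem_Ioi.2 (max_lt (by linarith) h2)
  · rw [Set.indicator_of_notMem h]
    simp only [Set.mem_Ioi, not_lt] at h
    refine le_of_eq ?_
    have he : (fun u => (u, v)) ⁻¹' {p : ℝ × ℝ | x < p.1 + p.2 ∧ T < p.1 ∧ p.1 ≤ x - T} = ∅ := by
      ext u
      simp only [Set.mem_preimage, Set.mem_setOf_eq, Set.mem_empty_iff_false, iff_false, not_and]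
      intro h1 _ h3
      linarith
    show μ ((fun u => (u, v)) ⁻¹' {p : ℝ × ℝ | x < p.1 + p.2 ∧ T < p.1 ∧ p.1 ≤ x - T}) = 0
    rw [he, measure_empty]

lemma split_max (μ ν : Measure ℝ) [SFinite μ] [IsFiniteMeasure ν] (x T : ℝ) (h : T ≤ x - T) :
    ∫⁻ v in Set.Ioi T, μ (Set.Ioi (max (x - v) T)) ∂ν
      = (∫⁻ v in Set.Ioc T (x - T), μ (Set.Ioi (x - v)) ∂ν)
        + μ (Set.Ioi T) * ν (Set.Ioi (x - T)) := by
  rw [← Set.Ioc_union_Ioi_eq_Ioi h,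
    lintegral_union measurableSet_Ioi Set.Ioc_disjoint_Ioi_same]
  congr 1
  · apply setLIntegral_congr_fun measurableSet_Ioc
    intro v hv
    dsimp only
    rw [max_eq_left (by linarith [hv.2] : T ≤ x - v)]
  · have hcg : ∀ᵐ v ∂(ν.restrict (Set.Ioi (x - T))),
        μ (Set.Ioi (max (x - v) T)) = μ (Set.Ioi T) := by
      filter_upwards [ae_restrict_mem measurableSet_Ioi] with v hv
      rw [max_eq_right (by linarith [Set.mem_Ioi.1 hv] : x - v ≤ T)]
    rw [lintegral_congr_ae hcg, setLIntegral_const, Set.Ioc_union_Ioi_eq_Ioi h]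

lemma partition (μ ν : Measure ℝ) [SFinite μ] [SFinite ν] (x T : ℝ) (h : T ≤ x - T) :
    (μ.prod ν) {p : ℝ × ℝ | x < p.1 + p.2}
      = (μ.prod ν) {p : ℝ × ℝ | x < p.1 + p.2 ∧ p.1 ∈ Set.Iic T}
        + (μ.prod ν) {p : ℝ × ℝ | x < p.1 + p.2 ∧ T < p.1 ∧ p.1 ≤ x - T}
        + (μ.prod ν) {p : ℝ × ℝ | x < p.1 + p.2 ∧ x - T < p.1} := by
  have h1 : {p : ℝ × ℝ | x < p.1 + p.2 ∧ p.1 ∈ Set.Iic T}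
      ∪ {p : ℝ × ℝ | x < p.1 + p.2 ∧ T < p.1 ∧ p.1 ≤ x - T}
      = {p : ℝ × ℝ | x < p.1 + p.2 ∧ p.1 ≤ x - T} := by
    ext p
    simp only [Set.mem_union, Set.mem_setOf_eq, Set.mem_Iic]
    constructor
    · rintro (⟨ha, hb⟩ | ⟨ha, -, hc⟩)
      · exact ⟨ha, hb.trans h⟩
      · exact ⟨ha, hc⟩
    · rintro ⟨ha, hb⟩
      by_cases hT : p.1 ≤ T
      · exact Or.inl ⟨ha, hT⟩
      · exact Or.inr ⟨ha, lt_of_not_ge hT, hb⟩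
  have h2 : {p : ℝ × ℝ | x < p.1 + p.2 ∧ p.1 ≤ x - T}
      ∪ {p : ℝ × ℝ | x < p.1 + p.2 ∧ x - T < p.1} = {p : ℝ × ℝ | x < p.1 + p.2} := by
    ext p
    simp only [Set.mem_union, Set.mem_setOf_eq]
    constructor
    · rintro (⟨ha, -⟩ | ⟨ha, -⟩) <;> exact ha
    · intro ha
      by_cases hT : p.1 ≤ x - T
      · exact Or.inl ⟨ha, hT⟩
      · exact Or.inr ⟨ha, lt_of_not_ge hT⟩
  have d1 : Disjoint {p : ℝ × ℝ | x < p.1 + p.2 ∧ p.1 ∈ Set.Iic T}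
      {p : ℝ × ℝ | x < p.1 + p.2 ∧ T < p.1 ∧ p.1 ≤ x - T} := by
    rw [Set.disjoint_left]
    rintro p ⟨-, hb⟩ ⟨-, hc, -⟩
    exact absurd hc (Set.mem_Iic.1 hb).not_gt
  have d2 : Disjoint {p : ℝ × ℝ | x < p.1 + p.2 ∧ p.1 ≤ x - T}
      {p : ℝ × ℝ | x < p.1 + p.2 ∧ x - T < p.1} := by
    rw [Set.disjoint_left]
    rintro p ⟨-, hb⟩ ⟨-, hc⟩
    exact absurd hc hb.not_gt
  have m1 : MeasurableSet {p : ℝ × ℝ | x < p.1 + p.2 ∧ T < p.1 ∧ p.1 ≤ x - T} :=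
    (meas_sum_set x).inter
      ((measurableSet_Ioc.preimage measurable_fst : MeasurableSet (Prod.fst ⁻¹' Set.Ioc T (x-T))))
  have m2 : MeasurableSet {p : ℝ × ℝ | x < p.1 + p.2 ∧ x - T < p.1} :=
    (meas_sum_set x).inter (measurableSet_Ioi.preimage measurable_fst)
  rw [← h2, measure_union d2 m2, ← h1, measure_union d1 m1]

end part4

section part5

lemma four_disjoint_le (μ : Measure ℝ) [IsProbabilityMeasure μ] (x T : ℝ) (hx : 2*T ≤ x) :
    (μ.prod μ) {p : ℝ × ℝ | x < p.1 + p.2 ∧ T < p.2 ∧ p.2 ≤ x - T}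
      + (μ.prod μ) {p : ℝ × ℝ | x < p.1 + p.2 ∧ p.2 ∈ Set.Iic T}
      + (μ.prod μ) {p : ℝ × ℝ | x < p.1 + p.2 ∧ p.1 ∈ Set.Iic T}
      + μ (Set.Ioi T) * μ (Set.Ioi (x - T))
      ≤ (μ.prod μ) {p : ℝ × ℝ | x < p.1 + p.2} := by
  set A4 := {p : ℝ × ℝ | x < p.1 + p.2 ∧ T < p.2 ∧ p.2 ≤ x - T} with hA4
  set A1 := {p : ℝ × ℝ | x < p.1 + p.2 ∧ p.2 ∈ Set.Iic T} with hA1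
  set A2 := {p : ℝ × ℝ | x < p.1 + p.2 ∧ p.1 ∈ Set.Iic T} with hA2
  set A3 := Set.Ioi T ×ˢ Set.Ioi (x - T) with hA3
  have meas1 : MeasurableSet A1 :=
    (meas_sum_set x).inter (measurableSet_Iic.preimage measurable_snd)
  have meas2 : MeasurableSet A2 :=
    (meas_sum_set x).inter (measurableSet_Iic.preimage measurable_fst)
  have meas3 : MeasurableSet A3 := measurableSet_Ioi.prod measurableSet_Ioi
  have d41 : Disjoint A4 A1 := by
    rw [Set.disjoint_left]
    rintro p ⟨-, hb, -⟩ ⟨-, hc⟩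
    exact absurd hb (Set.mem_Iic.1 hc).not_gt
  have d42 : Disjoint A4 A2 := by
    rw [Set.disjoint_left]
    rintro p ⟨ha, -, hb⟩ ⟨-, hc⟩
    have := Set.mem_Iic.1 hc
    linarith
  have d12 : Disjoint A1 A2 := by
    rw [Set.disjoint_left]
    rintro p ⟨ha, hb⟩ ⟨-, hc⟩
    have := Set.mem_Iic.1 hb
    have := Set.mem_Iic.1 hc
    linarith
  have d43 : Disjoint A4 A3 := by
    rw [Set.disjoint_left]
    rintro p ⟨-, -, hb⟩ hc
    exact absurd (Set.mem_prod.1 hc).2 (not_lt.2 hb)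
  have d13 : Disjoint A1 A3 := by
    rw [Set.disjoint_left]
    rintro p ⟨-, hb⟩ hc
    have h1 := Set.mem_Iic.1 hb
    have h2 := Set.mem_Ioi.1 (Set.mem_prod.1 hc).2
    linarith
  have d23 : Disjoint A2 A3 := by
    rw [Set.disjoint_left]
    rintro p ⟨-, hb⟩ hc
    have h1 := Set.mem_Iic.1 hb
    have h2 := Set.mem_Ioi.1 (Set.mem_prod.1 hc).1
    linarith
  have hsub : A4 ∪ A1 ∪ A2 ∪ A3 ⊆ {p : ℝ × ℝ | x < p.1 + p.2} := by
    rintro p (((⟨ha, -⟩ | ⟨ha, -⟩) | ⟨ha, -⟩) | hp)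
    · exact ha
    · exact ha
    · exact ha
    · have h1 := Set.mem_Ioi.1 (Set.mem_prod.1 hp).1
      have h2 := Set.mem_Ioi.1 (Set.mem_prod.1 hp).2
      show x < p.1 + p.2
      linarith
  have e1 : (μ.prod μ) (A4 ∪ A1) = (μ.prod μ) A4 + (μ.prod μ) A1 := measure_union d41 meas1
  have e2 : (μ.prod μ) (A4 ∪ A1 ∪ A2) = (μ.prod μ) A4 + (μ.prod μ) A1 + (μ.prod μ) A2 := by
    rw [measure_union (Set.disjoint_union_left.2 ⟨d42, d12⟩) meas2, e1]
  have e3 : (μ.prod μ) (A4 ∪ A1 ∪ A2 ∪ A3)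
      = (μ.prod μ) A4 + (μ.prod μ) A1 + (μ.prod μ) A2 + (μ.prod μ) A3 := by
    rw [measure_union (Set.disjoint_union_left.2
      ⟨Set.disjoint_union_left.2 ⟨d43, d13⟩, d23⟩) meas3, e2]
  calc (μ.prod μ) A4 + (μ.prod μ) A1 + (μ.prod μ) A2 + μ (Set.Ioi T) * μ (Set.Ioi (x - T))
      = (μ.prod μ) (A4 ∪ A1 ∪ A2 ∪ A3) := by rw [e3, hA3, Measure.prod_prod]
    _ ≤ (μ.prod μ) {p : ℝ × ℝ | x < p.1 + p.2} := measure_mono hsub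

lemma tail_slice_aemeasurable (ν : Measure ℝ) (x : ℝ) :
    Measurable (fun u : ℝ => ν (Set.Ioi (x - u))) := by
  have : Monotone (fun u : ℝ => ν (Set.Ioi (x - u))) := by
    intro a b hab
    exact measure_mono (Set.Ioi_subset_Ioi (by linarith))
  exact this.measurable

lemma mtail_slice_measurable (ν : Measure ℝ) [IsFiniteMeasure ν] (x : ℝ) :
    Measurable (fun u : ℝ => mtail ν (x - u)) := by
  have : Monotone (fun u : ℝ => mtail ν (x - u)) := by
    intro a b hab
    exact mtail_anti ν (by linarith)
  exact this.measurable

lemma toReal_setLintegral (ν H : Measure ℝ) [IsFiniteMeasure ν] [IsFiniteMeasure H]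
    (x : ℝ) (s : Set ℝ) :
    (∫⁻ u in s, ν (Set.Ioi (x - u)) ∂H).toReal = ∫ u in s, mtail ν (x - u) ∂H := by
  rw [← integral_toReal ((tail_slice_aemeasurable ν x).aemeasurable)
    (ae_of_all _ (fun u => measure_lt_top ν _))]
  rfl

lemma shift_ratio_tendsto {F G : Measure ℝ} [IsProbabilityMeasure F] [IsProbabilityMeasure G]
    {γ l : ℝ} (hF : memL F γ)
    (h : Tendsto (fun x => mtail G x / mtail F x) atTop (nhds l)) (T : ℝ) :
    Tendsto (fun x => mtail G (x - T) / mtail F x) atTop (nhds (l * Real.exp (γ * T))) := by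
  have hshift : Tendsto (fun x : ℝ => x - T) atTop atTop :=
    tendsto_atTop_add_const_right atTop (-T) tendsto_id
  have h1 : Tendsto (fun x => mtail G (x - T) / mtail F (x - T)) atTop (nhds l) := h.comp hshift
  have h2 := h1.mul (hF T)
  refine h2.congr (fun x => ?_)
  have hb : mtail F (x - T) ≠ 0 := (mtail_pos hF (x - T)).ne'
  field_simp

end part5

section part6

lemma key_tendsto {F G : Measure ℝ} (H : Measure ℝ) [IsProbabilityMeasure F]
    [IsProbabilityMeasure G] [IsProbabilityMeasure H] {γ l : ℝ} (hF : memL F γ)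
    (h : Tendsto (fun x => mtail G x / mtail F x) atTop (nhds l)) (T : ℝ) :
    Tendsto (fun x => (∫ u in Set.Iic T, mtail G (x - u) ∂H) / mtail F x) atTop
      (nhds (l * ∫ u in Set.Iic T, Real.exp (γ * u) ∂H)) := by
  obtain ⟨C, hC1, hCb⟩ := global_bound hF h
  set K := C * (Real.exp (γ * T) + 1) with hK
  have hKev : ∀ᶠ x in atTop, mtail F (x - T) / mtail F x ≤ Real.exp (γ * T) + 1 :=
    (hF T).eventually (eventually_le_nhds (lt_add_one _))
  have main : Tendsto (fun x => ∫ u in Set.Iic T, mtail G (x - u) / mtail F x ∂H) atTop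
      (nhds (∫ u in Set.Iic T, l * Real.exp (γ * u) ∂H)) := by
    apply tendsto_integral_filter_of_dominated_convergence (fun _ => K)
    · filter_upwards with x
      exact ((mtail_slice_measurable G x).div_const _).aestronglyMeasurable
    · filter_upwards [hKev] with x hx
      filter_upwards [ae_restrict_mem measurableSet_Iic] with u hu
      have hu' : u ≤ T := Set.mem_Iic.1 hu
      have hpos := mtail_pos hF x
      rw [Real.norm_eq_abs, abs_of_nonneg (div_nonneg (mtail_nonneg G _) (mtail_nonneg F _))]
      calc mtail G (x - u) / mtail F x ≤ (C * mtail F (x - T)) / mtail F x := by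
            gcongr
            exact (hCb (x - u)).trans
              (mul_le_mul_of_nonneg_left (mtail_anti F (by linarith)) (by linarith))
        _ = C * (mtail F (x - T) / mtail F x) := by ring
        _ ≤ C * (Real.exp (γ * T) + 1) := by
            apply mul_le_mul_of_nonneg_left hx (by linarith)
    · exact integrable_const K
    · filter_upwards with u
      exact shift_ratio_tendsto hF h u
  have heq : ∫ u in Set.Iic T, l * Real.exp (γ * u) ∂H
      = l * ∫ u in Set.Iic T, Real.exp (γ * u) ∂H := by
    rw [integral_const_mul]
  rw [← heq]
  exact main.congr (fun x => integral_div _ _)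

end part6

section part7

lemma self_ratio {F : Measure ℝ} [IsProbabilityMeasure F] {γ : ℝ} (hF : memL F γ) :
    Tendsto (fun x => mtail F x / mtail F x) atTop (nhds 1) := by
  have : ∀ x : ℝ, mtail F x / mtail F x = 1 := fun x => div_self (mtail_pos hF x).ne'
  simpa [this] using tendsto_const_nhds

lemma two_sided_le {F : Measure ℝ} [IsProbabilityMeasure F] (x T : ℝ) (hx : 2*T ≤ x) :
    (∫⁻ u in Set.Iic T, F (Set.Ioi (x - u)) ∂F) + (∫⁻ u in Set.Iic T, F (Set.Ioi (x - u)) ∂F)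
      ≤ (F.prod F) {p : ℝ × ℝ | x < p.1 + p.2} := by
  have heq : (∫⁻ u in Set.Iic T, F (Set.Ioi (x - u)) ∂F)
      + (∫⁻ u in Set.Iic T, F (Set.Ioi (x - u)) ∂F)
      = (F.prod F) {p : ℝ × ℝ | x < p.1 + p.2 ∧ p.2 ∈ Set.Iic T}
      + (F.prod F) {p : ℝ × ℝ | x < p.1 + p.2 ∧ p.1 ∈ Set.Iic T} := by
    rw [slice_snd F F x T, slice_fst F F x T]
  rw [heq]
  have hd : Disjoint {p : ℝ × ℝ | x < p.1 + p.2 ∧ p.2 ∈ Set.Iic T}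
      {p : ℝ × ℝ | x < p.1 + p.2 ∧ p.1 ∈ Set.Iic T} := by
    rw [Set.disjoint_left]
    rintro p ⟨ha, hb⟩ ⟨-, hc⟩
    have h1 := Set.mem_Iic.1 hb
    have h2 := Set.mem_Iic.1 hc
    linarith
  rw [← measure_union hd ((meas_sum_set x).inter (measurableSet_Iic.preimage measurable_fst))]
  apply measure_mono
  rintro p (⟨ha, -⟩ | ⟨ha, -⟩) <;> exact ha

lemma Dr_eq (ν H : Measure ℝ) [IsProbabilityMeasure ν] [IsProbabilityMeasure H] (x T : ℝ) :
    ((∫⁻ u in Set.Iic T, ν (Set.Ioi (x - u)) ∂H)).toReal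
      = ∫ u in Set.Iic T, mtail ν (x - u) ∂H := toReal_setLintegral ν H x _

lemma m_le_mgf {F : Measure ℝ} [IsProbabilityMeasure F] {γ : ℝ} (hS : memS F γ) (T : ℝ) :
    ∫ u in Set.Iic T, Real.exp (γ * u) ∂F ≤ mgfAt F γ := by
  obtain ⟨hL, hconv⟩ := hS
  have hDten := key_tendsto F hL (self_ratio hL) T
  have hev : ∀ᶠ x in atTop,
      2 * ((∫ u in Set.Iic T, mtail F (x - u) ∂F) / mtail F x)
        ≤ mtail (Measure.conv F F) x / mtail F x := by
    filter_upwards [eventually_ge_atTop (2*T)] with x hx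
    have h1 := two_sided_le (F := F) x T hx
    have hfin : (∫⁻ u in Set.Iic T, F (Set.Ioi (x - u)) ∂F) ≠ ⊤ := by
      have hle : (∫⁻ u in Set.Iic T, F (Set.Ioi (x - u)) ∂F)
          ≤ (F.prod F) {p : ℝ × ℝ | x < p.1 + p.2} := le_trans le_self_add h1
      exact ne_of_lt (lt_of_le_of_lt hle (measure_lt_top _ _))
    have h2 : (∫⁻ u in Set.Iic T, F (Set.Ioi (x - u)) ∂F).toReal
        + (∫⁻ u in Set.Iic T, F (Set.Ioi (x - u)) ∂F).toReal
        ≤ mtail (Measure.conv F F) x := by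
      rw [mtail, conv_Ioi]
      rw [← ENNReal.toReal_add hfin hfin]
      exact ENNReal.toReal_mono (measure_ne_top _ _) h1
    rw [Dr_eq F F x T] at h2
    have hpos := mtail_pos hL x
    calc 2 * ((∫ u in Set.Iic T, mtail F (x - u) ∂F) / mtail F x)
        = ((∫ u in Set.Iic T, mtail F (x - u) ∂F) + (∫ u in Set.Iic T, mtail F (x - u) ∂F))
          / mtail F x := by ring
      _ ≤ mtail (Measure.conv F F) x / mtail F x := by gcongr
  have hfinal := le_of_tendsto_of_tendsto (hDten.const_mul 2) hconv hev
  rw [one_mul] at hfinal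
  linarith

end part7

section part8

lemma integrable_on_Iic_exp (μ : Measure ℝ) [IsFiniteMeasure μ] {γ : ℝ} (hγ : 0 ≤ γ) (T : ℝ) :
    IntegrableOn (fun u => Real.exp (γ * u)) (Set.Iic T) μ := by
  refine Integrable.mono' (integrable_const (Real.exp (γ * T)))
    (Continuous.aestronglyMeasurable (by continuity)) ?_
  filter_upwards [ae_restrict_mem measurableSet_Iic] with u hu
  rw [Real.norm_eq_abs, abs_of_nonneg (Real.exp_nonneg _)]
  exact Real.exp_le_exp.2 (mul_le_mul_of_nonneg_left (Set.mem_Iic.1 hu) hγ)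

lemma integrable_exp_of_bound {μ : Measure ℝ} [IsProbabilityMeasure μ] {γ B : ℝ} (hγ : 0 ≤ γ)
    (hB : ∀ T : ℝ, ∫ u in Set.Iic T, Real.exp (γ * u) ∂μ ≤ B) :
    Integrable (fun u => Real.exp (γ * u)) μ := by
  set f : ℝ → ENNReal := fun u => ENNReal.ofReal (Real.exp (γ * u)) with hf
  have hmeas : Measurable f := by
    apply Measurable.ennreal_ofReal
    exact (Real.continuous_exp.comp (continuous_const.mul continuous_id)).measurable
  have hmain : Tendsto (fun n : ℕ => ∫⁻ u, (Set.Iic (n:ℝ)).indicator f u ∂μ) atTop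
      (nhds (∫⁻ u, f u ∂μ)) := by
    apply lintegral_tendsto_of_tendsto_of_monotone
    · exact fun n => (hmeas.indicator measurableSet_Iic).aemeasurable
    · filter_upwards with u
      intro n m hnm
      exact Set.indicator_le_indicator_of_subset (Set.Iic_subset_Iic.2 (by exact_mod_cast hnm))
        (fun a => zero_le) u
    · filter_upwards with u
      have : ∀ᶠ n : ℕ in atTop, (Set.Iic (n:ℝ)).indicator f u = f u := by
        filter_upwards [eventually_ge_atTop (Nat.ceil u)] with n hn
        apply Set.indicator_of_mem
        exact Set.mem_Iic.2 (le_trans (Nat.le_ceil u) (by exact_mod_cast hn))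
      exact Tendsto.congr' (this.mono (fun n h => h.symm)) tendsto_const_nhds
  have hbd : ∀ n : ℕ, (∫⁻ u, (Set.Iic (n:ℝ)).indicator f u ∂μ) ≤ ENNReal.ofReal B := by
    intro n
    rw [lintegral_indicator measurableSet_Iic]
    have hint : IntegrableOn (fun u => Real.exp (γ * u)) (Set.Iic (n:ℝ)) μ :=
      integrable_on_Iic_exp μ hγ _
    rw [← ofReal_integral_eq_lintegral_ofReal hint
      (ae_of_all _ (fun u => Real.exp_nonneg _))]
    exact ENNReal.ofReal_le_ofReal (hB _)
  have hfin : (∫⁻ u, f u ∂μ) ≤ ENNReal.ofReal B := le_of_tendsto hmain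
    (Eventually.of_forall hbd)
  refine ⟨(Continuous.aestronglyMeasurable (by continuity)), ?_⟩
  rw [hasFiniteIntegral_iff_ofReal (ae_of_all _ (fun u => Real.exp_nonneg _))]
  exact lt_of_le_of_lt hfin ENNReal.ofReal_lt_top

lemma integrable_exp_transfer {μ F : Measure ℝ} [IsProbabilityMeasure μ] [IsProbabilityMeasure F]
    {γ C : ℝ} (hγ : 0 ≤ γ) (hC : 1 ≤ C)
    (hb : ∀ s : ℝ, μ (Set.Ioi s) ≤ ENNReal.ofReal C * F (Set.Ioi s))
    (hF : Integrable (fun u => Real.exp (γ * u)) F) :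
    Integrable (fun u => Real.exp (γ * u)) μ := by
  have hmeas : ∀ (ν : Measure ℝ), AEMeasurable (fun u => Real.exp (γ * u)) ν := fun ν =>
    (Real.continuous_exp.comp (continuous_const.mul continuous_id)).measurable.aemeasurable
  have hptw : ∀ t : ℝ, 0 < t →
      μ {a : ℝ | t < Real.exp (γ * a)} ≤ ENNReal.ofReal C * F {a : ℝ | t < Real.exp (γ * a)} := by
    intro t ht
    rcases eq_or_lt_of_le hγ with hγ0 | hγpos
    · have : {a : ℝ | t < Real.exp (γ * a)} = ∅ ∨ {a : ℝ | t < Real.exp (γ * a)} = Set.univ := by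
        rcases lt_or_ge t 1 with h | h
        · right; ext a; simp [← hγ0, h]
        · left; ext a; simp [← hγ0, not_lt.2 h]
      rcases this with h | h
      · simp [h]
      · rw [h]
        calc μ Set.univ = 1 := measure_univ
          _ ≤ ENNReal.ofReal C * 1 := by
              rw [mul_one]
              exact_mod_cast (ENNReal.one_le_ofReal.2 hC)
          _ = ENNReal.ofReal C * F Set.univ := by rw [measure_univ]
    · have hset : {a : ℝ | t < Real.exp (γ * a)} = Set.Ioi (Real.log t / γ) := by
        ext a
        simp only [Set.mem_setOf_eq, Set.mem_Ioi]
        rw [div_lt_iff₀ hγpos, ← Real.log_lt_iff_lt_exp ht, mul_comm]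
      rw [hset]
      exact hb _
  have key : (∫⁻ a, ENNReal.ofReal (Real.exp (γ * a)) ∂μ)
      ≤ 1 + ENNReal.ofReal C * ∫⁻ a, ENNReal.ofReal (Real.exp (γ * a)) ∂F := by
    rw [lintegral_eq_lintegral_meas_lt μ (ae_of_all _ (fun u => Real.exp_nonneg _)) (hmeas μ),
      lintegral_eq_lintegral_meas_lt F (ae_of_all _ (fun u => Real.exp_nonneg _)) (hmeas F)]
    have hsplit : Set.Ioi (0:ℝ) = Set.Ioc 0 1 ∪ Set.Ioi 1 := (Set.Ioc_union_Ioi_eq_Ioi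
      (by norm_num)).symm
    conv_lhs => rw [hsplit]
    rw [lintegral_union measurableSet_Ioi Set.Ioc_disjoint_Ioi_same]
    have h1 : (∫⁻ t in Set.Ioc (0:ℝ) 1, μ {a | t < Real.exp (γ * a)}) ≤ 1 := by
      calc (∫⁻ t in Set.Ioc (0:ℝ) 1, μ {a | t < Real.exp (γ * a)})
          ≤ ∫⁻ _ in Set.Ioc (0:ℝ) 1, 1 := by
            apply lintegral_mono
            intro t
            exact prob_le_one
        _ = 1 := by simp
    have h2 : (∫⁻ t in Set.Ioi (1:ℝ), μ {a | t < Real.exp (γ * a)})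
        ≤ ENNReal.ofReal C * ∫⁻ t in Set.Ioi (0:ℝ), F {a | t < Real.exp (γ * a)} := by
      rw [← lintegral_const_mul' _ _ ENNReal.ofReal_ne_top]
      calc (∫⁻ t in Set.Ioi (1:ℝ), μ {a | t < Real.exp (γ * a)})
          ≤ ∫⁻ t in Set.Ioi (1:ℝ), ENNReal.ofReal C * F {a | t < Real.exp (γ * a)} := by
            apply setLIntegral_mono' measurableSet_Ioi
            intro t ht
            exact hptw t (lt_trans one_pos (Set.mem_Ioi.1 ht))
        _ ≤ ∫⁻ t in Set.Ioi (0:ℝ), ENNReal.ofReal C * F {a | t < Real.exp (γ * a)} :=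
            lintegral_mono_set (fun t ht => lt_trans one_pos (Set.mem_Ioi.1 ht))
    exact add_le_add h1 h2
  have hFfin : (∫⁻ a, ENNReal.ofReal (Real.exp (γ * a)) ∂F) < ⊤ := by
    rw [← hasFiniteIntegral_iff_ofReal (ae_of_all _ (fun u => Real.exp_nonneg _))]
    exact hF.2
  refine ⟨Continuous.aestronglyMeasurable (by continuity), ?_⟩
  rw [hasFiniteIntegral_iff_ofReal (ae_of_all _ (fun u => Real.exp_nonneg _))]
  exact lt_of_le_of_lt key (by
    apply ENNReal.add_lt_top.2
    exact ⟨ENNReal.one_lt_top, ENNReal.mul_lt_top ENNReal.ofReal_lt_top hFfin⟩)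

lemma m_tendsto_mgf {μ : Measure ℝ} [IsProbabilityMeasure μ] {γ : ℝ}
    (hInt : Integrable (fun u => Real.exp (γ * u)) μ) :
    Tendsto (fun T : ℝ => ∫ u in Set.Iic T, Real.exp (γ * u) ∂μ) atTop (nhds (mgfAt μ γ)) := by
  have h := tendsto_setIntegral_of_monotone (f := fun u => Real.exp (γ * u)) (μ := μ)
    (s := fun T : ℝ => Set.Iic T) (fun T => measurableSet_Iic)
    (fun a b hab => Set.Iic_subset_Iic.2 hab) ?_
  · have hU : (⋃ T : ℝ, Set.Iic T) = Set.univ := Set.iUnion_Iic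
    rw [hU] at h
    simpa [mgfAt, setIntegral_univ] using h
  · rw [Set.iUnion_Iic]
    rw [integrableOn_univ]
    exact hInt

lemma tail_exp_le {μ : Measure ℝ} [IsProbabilityMeasure μ] {γ : ℝ} (hγ : 0 ≤ γ)
    (hInt : Integrable (fun u => Real.exp (γ * u)) μ) (T : ℝ) :
    mtail μ T * Real.exp (γ * T) ≤ mgfAt μ γ - ∫ u in Set.Iic T, Real.exp (γ * u) ∂μ := by
  have hsplit : (∫ u in Set.Iic T, Real.exp (γ * u) ∂μ) + ∫ u in Set.Ioi T, Real.exp (γ * u) ∂μ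
      = mgfAt μ γ := by
    rw [mgfAt, ← integral_add_compl (measurableSet_Iic (a := T)) hInt, Set.compl_Iic]
  have h2 : mtail μ T * Real.exp (γ * T) ≤ ∫ u in Set.Ioi T, Real.exp (γ * u) ∂μ := by
    have hc : (∫ _ in Set.Ioi T, Real.exp (γ * T) ∂μ) = mtail μ T * Real.exp (γ * T) := by
      rw [setIntegral_const, smul_eq_mul, mtail, measureReal_def]
    rw [← hc]
    apply setIntegral_mono_on (integrableOn_const (C := Real.exp (γ * T)) (measure_ne_top μ (Set.Ioi T)))
      (hInt.integrableOn) measurableSet_Ioi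
    intro u hu
    exact Real.exp_le_exp.2 (mul_le_mul_of_nonneg_left (Set.mem_Ioi.1 hu).le hγ)
  linarith

end part8

section part9

lemma mid_bound {F F1 F2 : Measure ℝ} [IsProbabilityMeasure F] [IsProbabilityMeasure F1]
    [IsProbabilityMeasure F2] {C1 C2 : ℝ} (hC1 : 1 ≤ C1) (hC2 : 1 ≤ C2)
    (hb1 : ∀ s : ℝ, F1 (Set.Ioi s) ≤ ENNReal.ofReal C1 * F (Set.Ioi s))
    (hb2 : ∀ s : ℝ, F2 (Set.Ioi s) ≤ ENNReal.ofReal C2 * F (Set.Ioi s))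
    (x T : ℝ) (hx : 2*T ≤ x) :
    (F1.prod F2) {p : ℝ × ℝ | x < p.1 + p.2 ∧ T < p.1 ∧ p.1 ≤ x - T}
      + ENNReal.ofReal (C1*C2) * ((∫⁻ u in Set.Iic T, F (Set.Ioi (x - u)) ∂F)
          + (∫⁻ u in Set.Iic T, F (Set.Ioi (x - u)) ∂F))
      ≤ ENNReal.ofReal (C1*C2) * (F.prod F) {p : ℝ × ℝ | x < p.1 + p.2} := by
  have hT : T ≤ x - T := by linarith
  have step1 : (F1.prod F2) {p : ℝ × ℝ | x < p.1 + p.2 ∧ T < p.1 ∧ p.1 ≤ x - T}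
      ≤ ENNReal.ofReal C2 * (F1.prod F) {p : ℝ × ℝ | x < p.1 + p.2 ∧ T < p.1 ∧ p.1 ≤ x - T} := by
    rw [mid_slice_fst F1 F2 x T, mid_slice_fst F1 F x T]
    rw [← lintegral_const_mul' _ _ ENNReal.ofReal_ne_top]
    exact lintegral_mono (fun u => hb2 _)
  have step2 : (F1.prod F) {p : ℝ × ℝ | x < p.1 + p.2 ∧ T < p.1 ∧ p.1 ≤ x - T}
      ≤ ENNReal.ofReal C1 * ((F.prod F) {p : ℝ × ℝ | x < p.1 + p.2 ∧ T < p.2 ∧ p.2 ≤ x - T}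
          + F (Set.Ioi T) * F (Set.Ioi (x - T))) := by
    calc (F1.prod F) {p : ℝ × ℝ | x < p.1 + p.2 ∧ T < p.1 ∧ p.1 ≤ x - T}
        ≤ ∫⁻ v in Set.Ioi T, F1 (Set.Ioi (max (x - v) T)) ∂F := mid_snd_bound F1 F x T
      _ ≤ ∫⁻ v in Set.Ioi T, ENNReal.ofReal C1 * F (Set.Ioi (max (x - v) T)) ∂F :=
          lintegral_mono (fun v => hb1 _)
      _ = ENNReal.ofReal C1 * ∫⁻ v in Set.Ioi T, F (Set.Ioi (max (x - v) T)) ∂F :=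
          lintegral_const_mul' _ _ ENNReal.ofReal_ne_top
      _ = ENNReal.ofReal C1 * ((∫⁻ v in Set.Ioc T (x - T), F (Set.Ioi (x - v)) ∂F)
            + F (Set.Ioi T) * F (Set.Ioi (x - T))) := by rw [split_max F F x T hT]
      _ = ENNReal.ofReal C1 * ((F.prod F) {p : ℝ × ℝ | x < p.1 + p.2 ∧ T < p.2 ∧ p.2 ≤ x - T}
            + F (Set.Ioi T) * F (Set.Ioi (x - T))) := by rw [mid_slice_snd F F x T]
  have hfour := four_disjoint_le F x T hx
  rw [slice_snd F F x T, slice_fst F F x T] at hfour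
  have hCC : ENNReal.ofReal (C1*C2) = ENNReal.ofReal C2 * ENNReal.ofReal C1 := by
    rw [← ENNReal.ofReal_mul (by linarith), mul_comm]
  calc (F1.prod F2) {p : ℝ × ℝ | x < p.1 + p.2 ∧ T < p.1 ∧ p.1 ≤ x - T}
      + ENNReal.ofReal (C1*C2) * ((∫⁻ u in Set.Iic T, F (Set.Ioi (x - u)) ∂F)
          + (∫⁻ u in Set.Iic T, F (Set.Ioi (x - u)) ∂F))
      ≤ ENNReal.ofReal C2 * (ENNReal.ofReal C1
          * ((F.prod F) {p : ℝ × ℝ | x < p.1 + p.2 ∧ T < p.2 ∧ p.2 ≤ x - T}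
            + F (Set.Ioi T) * F (Set.Ioi (x - T))))
        + ENNReal.ofReal (C1*C2) * ((∫⁻ u in Set.Iic T, F (Set.Ioi (x - u)) ∂F)
          + (∫⁻ u in Set.Iic T, F (Set.Ioi (x - u)) ∂F)) := by
        exact add_le_add (step1.trans (mul_le_mul_right step2 _)) le_rfl
    _ = ENNReal.ofReal (C1*C2)
        * ((F.prod F) {p : ℝ × ℝ | x < p.1 + p.2 ∧ T < p.2 ∧ p.2 ≤ x - T}
          + (∫⁻ u in Set.Iic T, F (Set.Ioi (x - u)) ∂F)
          + (∫⁻ u in Set.Iic T, F (Set.Ioi (x - u)) ∂F)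
          + F (Set.Ioi T) * F (Set.Ioi (x - T))) := by
        rw [hCC]
        ring
    _ ≤ ENNReal.ofReal (C1*C2) * (F.prod F) {p : ℝ × ℝ | x < p.1 + p.2} :=
        mul_le_mul_right hfour _

lemma mid_bound_real {F F1 F2 : Measure ℝ} [IsProbabilityMeasure F] [IsProbabilityMeasure F1]
    [IsProbabilityMeasure F2] {C1 C2 : ℝ} (hC1 : 1 ≤ C1) (hC2 : 1 ≤ C2)
    (hb1 : ∀ s : ℝ, F1 (Set.Ioi s) ≤ ENNReal.ofReal C1 * F (Set.Ioi s))
    (hb2 : ∀ s : ℝ, F2 (Set.Ioi s) ≤ ENNReal.ofReal C2 * F (Set.Ioi s))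
    (x T : ℝ) (hx : 2*T ≤ x) :
    ((F1.prod F2) {p : ℝ × ℝ | x < p.1 + p.2 ∧ T < p.1 ∧ p.1 ≤ x - T}).toReal
      ≤ C1*C2 * (mtail (Measure.conv F F) x - 2 * ∫ u in Set.Iic T, mtail F (x - u) ∂F) := by
  have h := mid_bound hC1 hC2 hb1 hb2 x T hx
  set D := ∫⁻ u in Set.Iic T, F (Set.Ioi (x - u)) ∂F with hD
  have hDfin : D ≠ ⊤ := by
    refine ne_of_lt (lt_of_le_of_lt (lintegral_mono (fun u => prob_le_one)) ?_)
    simp only [lintegral_const, Measure.restrict_apply MeasurableSet.univ, Set.univ_inter, one_mul]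
    exact measure_lt_top _ _
  have hMfin : (F1.prod F2) {p : ℝ × ℝ | x < p.1 + p.2 ∧ T < p.1 ∧ p.1 ≤ x - T} ≠ ⊤ :=
    measure_ne_top _ _
  have hEfin : (F.prod F) {p : ℝ × ℝ | x < p.1 + p.2} ≠ ⊤ := measure_ne_top _ _
  have hCC0 : (0:ℝ) ≤ C1*C2 := by nlinarith
  have htr := ENNReal.toReal_mono (by
      exact ENNReal.mul_ne_top ENNReal.ofReal_ne_top hEfin) h
  rw [ENNReal.toReal_add hMfin (by
      exact ENNReal.mul_ne_top ENNReal.ofReal_ne_top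
        (by exact ENNReal.add_ne_top.2 ⟨hDfin, hDfin⟩)),
    ENNReal.toReal_mul, ENNReal.toReal_mul, ENNReal.toReal_ofReal hCC0,
    ENNReal.toReal_add hDfin hDfin] at htr
  have hDr : D.toReal = ∫ u in Set.Iic T, mtail F (x - u) ∂F := Dr_eq F F x T
  have hE : ((F.prod F) {p : ℝ × ℝ | x < p.1 + p.2}).toReal = mtail (Measure.conv F F) x := by
    rw [mtail, conv_Ioi]
  rw [hDr, hE] at htr
  linarith

end part9

section final

lemma lint_fin (ν H : Measure ℝ) [IsProbabilityMeasure ν] [IsProbabilityMeasure H] (x T : ℝ) :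
    (∫⁻ u in Set.Iic T, ν (Set.Ioi (x - u)) ∂H) ≠ ⊤ := by
  refine ne_of_lt (lt_of_le_of_lt (lintegral_mono (fun u => prob_le_one)) ?_)
  simp only [lintegral_const, Measure.restrict_apply MeasurableSet.univ, Set.univ_inter, one_mul]
  exact measure_lt_top _ _

lemma decomp (F1 F2 : Measure ℝ) [IsProbabilityMeasure F1] [IsProbabilityMeasure F2]
    (x T : ℝ) (hT : T ≤ x - T) :
    mtail (Measure.conv F1 F2) x
      = (∫ u in Set.Iic T, mtail F2 (x - u) ∂F1)
        + ((F1.prod F2) {p : ℝ × ℝ | x < p.1 + p.2 ∧ T < p.1 ∧ p.1 ≤ x - T}).toReal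
        + ((∫ v in Set.Iic T, mtail F1 (x - v) ∂F2) + mtail F1 (x - T) * mtail F2 T) := by
  rw [mtail, conv_Ioi, partition F1 F2 x T hT]
  rw [ENNReal.toReal_add (ENNReal.add_ne_top.2 ⟨measure_ne_top _ _, measure_ne_top _ _⟩)
    (measure_ne_top _ _), ENNReal.toReal_add (measure_ne_top _ _) (measure_ne_top _ _)]
  congr 1
  · congr 1
    rw [slice_fst F1 F2 x T]
    exact toReal_setLintegral F2 F1 x _
  · rw [slice_top F1 F2 x T,
      ENNReal.toReal_add (lint_fin F1 F2 x T) (ENNReal.mul_ne_top (measure_ne_top _ _)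
        (measure_ne_top _ _)), ENNReal.toReal_mul]
    congr 1
    exact toReal_setLintegral F1 F2 x _

end final

theorem stmt4 (F F1 F2 : Measure ℝ) [IsProbabilityMeasure F] [IsProbabilityMeasure F1]
    [IsProbabilityMeasure F2] (γ : ℝ) (hγ : 0 ≤ γ) (hS : memS F γ) (l1 l2 : ℝ)
    (h1 : Tendsto (fun x => mtail F1 x / mtail F x) atTop (nhds l1))
    (h2 : Tendsto (fun x => mtail F2 x / mtail F x) atTop (nhds l2)) :
    Tendsto (fun x => mtail (Measure.conv F1 F2) x / mtail F x) atTop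
      (nhds (l1 * mgfAt F2 γ + l2 * mgfAt F1 γ)) := by
  obtain ⟨hL, hconv⟩ := hS
  obtain ⟨C1, hC11, hCb1⟩ := global_bound hL h1
  obtain ⟨C2, hC21, hCb2⟩ := global_bound hL h2
  have hb1 : ∀ s : ℝ, F1 (Set.Ioi s) ≤ ENNReal.ofReal C1 * F (Set.Ioi s) :=
    fun s => global_bound_ennreal hC11 hCb1 s
  have hb2 : ∀ s : ℝ, F2 (Set.Ioi s) ≤ ENNReal.ofReal C2 * F (Set.Ioi s) :=
    fun s => global_bound_ennreal hC21 hCb2 s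
  have hl1 : 0 ≤ l1 := ratio_limit_nonneg h1
  have hl2 : 0 ≤ l2 := ratio_limit_nonneg h2
  have hIntF : Integrable (fun u => Real.exp (γ * u)) F :=
    integrable_exp_of_bound hγ (fun T => m_le_mgf ⟨hL, hconv⟩ T)
  have hInt1 : Integrable (fun u => Real.exp (γ * u)) F1 :=
    integrable_exp_transfer hγ hC11 hb1 hIntF
  have hInt2 : Integrable (fun u => Real.exp (γ * u)) F2 :=
    integrable_exp_transfer hγ hC21 hb2 hIntF
  have hmF := m_tendsto_mgf hIntF
  have hm1 := m_tendsto_mgf hInt1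
  have hm2 := m_tendsto_mgf hInt2
  have hCC0 : (0:ℝ) < C1 * C2 := by nlinarith
  set L := l1 * mgfAt F2 γ + l2 * mgfAt F1 γ with hLdef
  rw [Metric.tendsto_nhds]
  intro ε hε
  have hTev : ∀ᶠ T in (atTop : Filter ℝ),
      (mgfAt F γ - (∫ u in Set.Iic T, Real.exp (γ*u) ∂F) < ε / (16 * (C1*C2)))
      ∧ (mgfAt F1 γ - (∫ u in Set.Iic T, Real.exp (γ*u) ∂F1) < ε / (8 * (l2+1)))
      ∧ (mgfAt F2 γ - (∫ u in Set.Iic T, Real.exp (γ*u) ∂F2) < ε / (16 * (l1+1))) := by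
    refine Eventually.and ?_ (Eventually.and ?_ ?_)
    · have h' := hmF.eventually (eventually_gt_nhds
        (show mgfAt F γ - ε / (16 * (C1*C2)) < mgfAt F γ by
          have : 0 < ε / (16 * (C1*C2)) := by positivity
          linarith))
      filter_upwards [h'] with T hT
      linarith
    · have h' := hm1.eventually (eventually_gt_nhds
        (show mgfAt F1 γ - ε / (8 * (l2+1)) < mgfAt F1 γ by
          have : 0 < ε / (8 * (l2+1)) := by positivity
          linarith))
      filter_upwards [h'] with T hT
      linarith
    · have h' := hm2.eventually (eventually_gt_nhds
        (show mgfAt F2 γ - ε / (16 * (l1+1)) < mgfAt F2 γ by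
          have : 0 < ε / (16 * (l1+1)) := by positivity
          linarith))
      filter_upwards [h'] with T hT
      linarith
  obtain ⟨T, hT1, hT2, hT3⟩ := hTev.exists
  set mFT := ∫ u in Set.Iic T, Real.exp (γ*u) ∂F with hmFT
  set m1T := ∫ u in Set.Iic T, Real.exp (γ*u) ∂F1 with hm1T
  set m2T := ∫ u in Set.Iic T, Real.exp (γ*u) ∂F2 with hm2T
  have key1 := key_tendsto F1 hL h2 T
  have key2 := key_tendsto F2 hL h1 T
  have key3 := (shift_ratio_tendsto hL h1 T).mul_const (mtail F2 T)
  have keyD := key_tendsto F hL (self_ratio hL) T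
  set Q := l2 * m1T + l1 * m2T + l1 * Real.exp (γ*T) * mtail F2 T with hQdef
  have hPten : Tendsto (fun x => (∫ u in Set.Iic T, mtail F2 (x-u) ∂F1) / mtail F x
      + (∫ v in Set.Iic T, mtail F1 (x-v) ∂F2) / mtail F x
      + (mtail F1 (x-T) / mtail F x) * mtail F2 T) atTop (nhds Q) := by
    exact (key1.add key2).add key3
  have hPev : ∀ᶠ x in atTop, |((∫ u in Set.Iic T, mtail F2 (x-u) ∂F1) / mtail F x
      + (∫ v in Set.Iic T, mtail F1 (x-v) ∂F2) / mtail F x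
      + (mtail F1 (x-T) / mtail F x) * mtail F2 T) - Q| < ε/4 := by
    have h' := Metric.tendsto_nhds.1 hPten (ε/4) (by linarith)
    simpa [Real.dist_eq] using h'
  have hmidten : Tendsto (fun x => C1*C2 * (mtail (Measure.conv F F) x / mtail F x
      - 2 * ((∫ u in Set.Iic T, mtail F (x-u) ∂F) / mtail F x))) atTop
      (nhds (C1*C2 * (2 * mgfAt F γ - 2 * (1 * mFT)))) :=
    (hconv.sub (keyD.const_mul 2)).const_mul (C1*C2)
  have hmidsmall : C1*C2 * (2 * mgfAt F γ - 2 * (1 * mFT)) < ε/4 := by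
    have hgap : mgfAt F γ - mFT < ε / (16 * (C1*C2)) := hT1
    have hmul := mul_lt_mul_of_pos_left hgap hCC0
    have h8 : C1*C2 * (ε / (16 * (C1*C2))) = ε/16 := by
      field_simp
    rw [h8] at hmul
    nlinarith
  have hmidev : ∀ᶠ x in atTop,
      ((F1.prod F2) {p : ℝ × ℝ | x < p.1 + p.2 ∧ T < p.1 ∧ p.1 ≤ x - T}).toReal / mtail F x
        < ε/4 := by
    have hev2 := hmidten.eventually (eventually_lt_nhds hmidsmall)
    filter_upwards [hev2, eventually_ge_atTop (2*T)] with x hx1 hx2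
    have hb := mid_bound_real hC11 hC21 hb1 hb2 x T hx2
    have hpos := mtail_pos hL x
    have hle : ((F1.prod F2) {p : ℝ × ℝ | x < p.1 + p.2 ∧ T < p.1 ∧ p.1 ≤ x - T}).toReal
        / mtail F x
        ≤ C1*C2 * (mtail (Measure.conv F F) x / mtail F x
          - 2 * ((∫ u in Set.Iic T, mtail F (x-u) ∂F) / mtail F x)) := by
      have heq : C1*C2 * (mtail (Measure.conv F F) x / mtail F x
          - 2 * ((∫ u in Set.Iic T, mtail F (x-u) ∂F) / mtail F x))
          = (C1*C2 * (mtail (Measure.conv F F) x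
            - 2 * ∫ u in Set.Iic T, mtail F (x-u) ∂F)) / mtail F x := by
        field_simp
      rw [heq]
      gcongr
    exact lt_of_le_of_lt hle hx1
  have hgap1 : 0 ≤ mgfAt F1 γ - m1T := by
    have := setIntegral_le_integral (s := Set.Iic T) hInt1 (ae_of_all _ (fun u => Real.exp_nonneg _))
    rw [hm1T]
    simp only [mgfAt]
    linarith
  have hgap2 : 0 ≤ mgfAt F2 γ - m2T := by
    have := setIntegral_le_integral (s := Set.Iic T) hInt2 (ae_of_all _ (fun u => Real.exp_nonneg _))
    rw [hm2T]
    simp only [mgfAt]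
    linarith
  have htail2 : mtail F2 T * Real.exp (γ*T) ≤ mgfAt F2 γ - m2T := tail_exp_le hγ hInt2 T
  have hQL : |Q - L| ≤ ε/4 := by
    set g1 := mgfAt F1 γ - m1T with hg1
    set g2 := mgfAt F2 γ - m2T with hg2
    have ha0 : 0 ≤ l2 * g1 := mul_nonneg hl2 hgap1
    have hb0 : 0 ≤ l1 * g2 := mul_nonneg hl1 hgap2
    have hc0 : 0 ≤ l1 * Real.exp (γ*T) * mtail F2 T :=
      mul_nonneg (mul_nonneg hl1 (Real.exp_nonneg _)) (mtail_nonneg _ _)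
    have hcb : l1 * Real.exp (γ*T) * mtail F2 T ≤ l1 * g2 := by
      have := mul_le_mul_of_nonneg_left htail2 hl1
      nlinarith
    have hQLeq : Q - L = -(l2 * g1) - (l1 * g2) + l1 * Real.exp (γ*T) * mtail F2 T := by
      rw [hQdef, hLdef, hg1, hg2]
      ring
    have habs : |Q - L| ≤ l2 * g1 + 2 * (l1 * g2) := by
      rw [abs_le]
      constructor
      · rw [hQLeq]; linarith
      · rw [hQLeq]; linarith
    have hbound1 : l2 * g1 ≤ ε/8 := by
      have h' : l2 * g1 ≤ l2 * (ε / (8 * (l2+1))) :=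
        mul_le_mul_of_nonneg_left hT2.le hl2
      have h'' : l2 * (ε / (8 * (l2+1))) ≤ (l2+1) * (ε / (8 * (l2+1))) := by
        apply mul_le_mul_of_nonneg_right (by linarith) (by positivity)
      have h8 : (l2+1) * (ε / (8 * (l2+1))) = ε/8 := by
        field_simp
      linarith
    have hbound2 : l1 * g2 ≤ ε/16 := by
      have h' : l1 * g2 ≤ l1 * (ε / (16 * (l1+1))) :=
        mul_le_mul_of_nonneg_left hT3.le hl1
      have h'' : l1 * (ε / (16 * (l1+1))) ≤ (l1+1) * (ε / (16 * (l1+1))) := by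
        apply mul_le_mul_of_nonneg_right (by linarith) (by positivity)
      have h16 : (l1+1) * (ε / (16 * (l1+1))) = ε/16 := by
        field_simp
      linarith
    calc |Q - L| ≤ l2 * g1 + 2 * (l1 * g2) := habs
      _ ≤ ε/8 + 2 * (ε/16) := by linarith
      _ = ε/4 := by ring
  filter_upwards [hPev, hmidev, eventually_ge_atTop (2*T)] with x hP hmid hx2
  rw [Real.dist_eq]
  have hpos := mtail_pos hL x
  have hdec := decomp F1 F2 x T (by linarith)
  set S1r := ∫ u in Set.Iic T, mtail F2 (x-u) ∂F1 with hS1r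
  set S3ar := ∫ v in Set.Iic T, mtail F1 (x-v) ∂F2 with hS3ar
  set midr := ((F1.prod F2) {p : ℝ × ℝ | x < p.1 + p.2 ∧ T < p.1 ∧ p.1 ≤ x - T}).toReal
    with hmidr
  have hmidnn : 0 ≤ midr / mtail F x := div_nonneg ENNReal.toReal_nonneg hpos.le
  have hsplit : mtail (Measure.conv F1 F2) x / mtail F x
      = (S1r / mtail F x + S3ar / mtail F x + (mtail F1 (x-T) / mtail F x) * mtail F2 T)
        + midr / mtail F x := by
    rw [hdec]
    ring
  have hfinal : mtail (Measure.conv F1 F2) x / mtail F x - L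
      = ((S1r / mtail F x + S3ar / mtail F x + (mtail F1 (x-T) / mtail F x) * mtail F2 T) - Q)
        + midr / mtail F x + (Q - L) := by
    rw [hsplit]
    ring
  rw [hfinal]
  calc |((S1r / mtail F x + S3ar / mtail F x + (mtail F1 (x-T) / mtail F x) * mtail F2 T) - Q)
        + midr / mtail F x + (Q - L)|
      ≤ |(S1r / mtail F x + S3ar / mtail F x + (mtail F1 (x-T) / mtail F x) * mtail F2 T) - Q|
        + |midr / mtail F x| + |Q - L| := abs_add_three _ _ _
    _ < ε/4 + ε/4 + ε/4 := by
        have : |midr / mtail F x| = midr / mtail F x := abs_of_nonneg hmidnn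
        rw [this]
        have hQL' : |Q - L| ≤ ε/4 := hQL
        apply add_lt_add_of_lt_of_le (add_lt_add hP hmid) hQL'
    _ < ε := by linarith
end

section
/- Let {X_i, i ≥ 1} be i.i.d. random variables with common distribution G, and suppose there exists F ∈ 𝓢(γ), γ ≥ 0, with Ḡ(x) = o(F̄(x)) as x → ∞. Then for every fixed n ≥ 1, P(Σ_{i=1}^n X_i > x) = o(F̄(x)) as x → ∞. -/
open MeasureTheory Filter Real Set Asymptotics

lemma mtail_meas (μ : Measure ℝ) [IsFiniteMeasure μ] : Measurable (mtail μ) :=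
  (mtail_anti μ).measurable

lemma memL.pos {F : Measure ℝ} [IsProbabilityMeasure F] {γ : ℝ} (h : memL F γ) (x : ℝ) :
    0 < mtail F x := by
  by_contra hx
  push_neg at hx
  have hx0 : mtail F x = 0 := le_antisymm hx (mtail_nonneg F x)
  have h0 := h 0
  have h0' : Tendsto (fun z : ℝ => mtail F (z - 0) / mtail F z) atTop (nhds 0) := by
    apply Tendsto.congr' _ tendsto_const_nhds
    filter_upwards [eventually_ge_atTop x] with z hz
    have : mtail F z = 0 :=
      le_antisymm (hx0 ▸ mtail_anti F hz) (mtail_nonneg F z)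
    simp [this]
  have := tendsto_nhds_unique h0 h0'
  simp at this

lemma tail_shift_bound {F : Measure ℝ} [IsProbabilityMeasure F] {γ : ℝ} (hL : memL F γ) (h : ℝ) :
    ∀ᶠ x in atTop, mtail F (x - h) ≤ (Real.exp (γ * h) + 1) * mtail F x := by
  have := (hL h).eventually_lt_const (by linarith : Real.exp (γ * h) < Real.exp (γ * h) + 1)
  filter_upwards [this] with x hx
  have hp := hL.pos x
  rw [div_lt_iff₀ hp] at hx
  linarith

lemma conv_Ioi_s5 (A B : Measure ℝ) [SFinite A] [SFinite B] (x : ℝ) :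
    (A.conv B) (Set.Ioi x) = ∫⁻ u, B (Set.Ioi (x - u)) ∂A := by
  rw [Measure.conv, Measure.map_apply measurable_add measurableSet_Ioi,
    Measure.prod_apply (measurable_add measurableSet_Ioi)]
  congr 1
  ext u
  congr 1
  ext v
  simp [sub_lt_iff_lt_add']

section
variable {F : Measure ℝ} [IsProbabilityMeasure F] {γ : ℝ}

lemma tailfun_meas (x : ℝ) : Measurable fun y : ℝ => mtail F (x - y) := by
  have : Monotone fun y : ℝ => mtail F (x - y) := fun a b hab =>
    mtail_anti F (by linarith)
  exact this.measurable

lemma tailfunE_meas (x : ℝ) : Measurable fun y : ℝ => F (Set.Ioi (x - y)) := by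
  have : (fun y : ℝ => F (Set.Ioi (x - y)))
      = fun y => ENNReal.ofReal (mtail F (x - y)) := by
    funext y
    rw [mtail, ENNReal.ofReal_toReal (measure_ne_top F _)]
  rw [this]
  exact (tailfun_meas x).ennreal_ofReal

lemma lint_tail_ne_top (s : Set ℝ) (x : ℝ) :
    (∫⁻ y in s, F (Set.Ioi (x - y)) ∂F) ≠ ⊤ := by
  refine ne_top_of_le_ne_top ?_ (lintegral_mono (fun y => prob_le_one))
  simp [lintegral_one]

lemma I1_tendsto (hL : memL F γ) :
    Tendsto (fun x => (∫ y in Set.Iic (0:ℝ), mtail F (x - y) ∂F) / mtail F x) atTop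
      (nhds (∫ y in Set.Iic (0:ℝ), Real.exp (γ * y) ∂F)) := by
  have key : Tendsto (fun x => ∫ y in Set.Iic (0:ℝ), mtail F (x - y) / mtail F x ∂F) atTop
      (nhds (∫ y in Set.Iic (0:ℝ), Real.exp (γ * y) ∂F)) := by
    apply tendsto_integral_filter_of_dominated_convergence (fun _ => (1:ℝ))
    · filter_upwards with x
      exact ((tailfun_meas (F := F) x).div_const _).aestronglyMeasurable
    · filter_upwards with x
      refine (ae_restrict_iff' measurableSet_Iic).2 (ae_of_all _ fun y hy => ?_)
      have hy' : y ≤ 0 := Set.mem_Iic.mp hy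
      have h1 : mtail F (x - y) ≤ mtail F x := mtail_anti F (by linarith : x ≤ x - y)
      have h2 : (0:ℝ) ≤ mtail F (x - y) / mtail F x :=
        div_nonneg (mtail_nonneg _ _) (mtail_nonneg _ _)
      rw [Real.norm_eq_abs, abs_of_nonneg h2]
      exact div_le_one_of_le₀ h1 (mtail_nonneg _ _)
    · exact integrable_const 1
    · exact ae_of_all _ fun y => hL y
  apply key.congr
  intro x
  rw [integral_div]

lemma split_identity (x : ℝ) :
    mtail (F.conv F) x = (∫ y in Set.Iic (0:ℝ), mtail F (x - y) ∂F)
      + (∫⁻ w in Set.Ioi (0:ℝ), F (Set.Ioi (x - w)) ∂F).toReal := by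
  have h1 : (F.conv F) (Set.Ioi x) = (∫⁻ y in Set.Iic (0:ℝ), F (Set.Ioi (x - y)) ∂F)
      + ∫⁻ w in Set.Ioi (0:ℝ), F (Set.Ioi (x - w)) ∂F := by
    rw [conv_Ioi_s5, ← lintegral_add_compl (fun y => F (Set.Ioi (x - y))) measurableSet_Iic,
      compl_Iic]
  have h2 : ∫ y in Set.Iic (0:ℝ), mtail F (x - y) ∂F
      = (∫⁻ y in Set.Iic (0:ℝ), F (Set.Ioi (x - y)) ∂F).toReal := by
    rw [← integral_toReal ((tailfunE_meas (F := F) x).aemeasurable.restrict)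
      (ae_of_all _ fun y => (measure_lt_top F _))]
    rfl
  rw [mtail, h1, ENNReal.toReal_add (lint_tail_ne_top _ _) (lint_tail_ne_top _ _), h2]

lemma K0_bound (hS : memS F γ) :
    ∃ D : ℝ, ∀ᶠ x in atTop,
      (∫⁻ w in Set.Ioi (0:ℝ), F (Set.Ioi (x - w)) ∂F).toReal ≤ D * mtail F x := by
  set c0 : ℝ := ∫ y in Set.Iic (0:ℝ), Real.exp (γ * y) ∂F with hc0
  set K0 : ℝ → ℝ := fun x => (∫⁻ w in Set.Ioi (0:ℝ), F (Set.Ioi (x - w)) ∂F).toReal with hK0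
  have hstep : Tendsto (fun x => K0 x / mtail F x) atTop (nhds (2 * mgfAt F γ - c0)) := by
    have h := hS.2.sub (I1_tendsto hS.1)
    apply h.congr
    intro x
    rw [split_identity (F := F) x]
    ring
  refine ⟨2 * mgfAt F γ - c0 + 1, ?_⟩
  filter_upwards [hstep.eventually_lt_const (by linarith :
      2 * mgfAt F γ - c0 < 2 * mgfAt F γ - c0 + 1)] with x hx
  have hp := hS.1.pos x
  rw [div_lt_iff₀ hp] at hx
  linarith


/-- tail comparison in ENNReal form -/
lemma tailE_le {A : Measure ℝ} [IsProbabilityMeasure A] {ε s : ℝ} (hε : 0 ≤ ε)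
    (h : mtail A s ≤ ε * mtail F s) :
    A (Set.Ioi s) ≤ ENNReal.ofReal ε * F (Set.Ioi s) := by
  rw [← ENNReal.ofReal_toReal (measure_ne_top A _), ← ENNReal.ofReal_toReal (measure_ne_top F _),
    ← ENNReal.ofReal_mul hε]
  exact ENNReal.ofReal_le_ofReal h

/-- The key pointwise decomposition bound. -/
lemma pointwise_bound (A B : Measure ℝ) [IsProbabilityMeasure A] [IsProbabilityMeasure B]
    {ε h : ℝ} (hε : 0 ≤ ε) (hh : 0 ≤ h)
    (hA : ∀ s ≥ h, A (Set.Ioi s) ≤ ENNReal.ofReal ε * F (Set.Ioi s))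
    (hB : ∀ s ≥ h, B (Set.Ioi s) ≤ ENNReal.ofReal ε * F (Set.Ioi s)) (x : ℝ) :
    (A.conv B) (Set.Ioi x) ≤ A (Set.Ioi (x - h)) + B (Set.Ioi (x - h)) +
      ENNReal.ofReal ε * (ENNReal.ofReal ε *
        ∫⁻ w in Set.Ioi (0:ℝ), F (Set.Ioi (x - w)) ∂F) := by
  have hset : ((fun p : ℝ × ℝ => p.1 + p.2) ⁻¹' Set.Ioi x) ⊆
      (Set.Ioi (x - h) ×ˢ Set.univ) ∪ (Set.univ ×ˢ Set.Ioi (x - h)) ∪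
      {p : ℝ × ℝ | p.1 ∈ Set.Ioc h (x - h) ∧ x < p.1 + p.2} := by
    rintro ⟨u, v⟩ hp
    simp only [Set.mem_preimage, Set.mem_Ioi] at hp
    by_cases h1 : x - h < u
    · exact Or.inl (Or.inl ⟨h1, Set.mem_univ _⟩)
    · by_cases h2 : x - h < v
      · exact Or.inl (Or.inr ⟨Set.mem_univ _, h2⟩)
      · push_neg at h1 h2
        exact Or.inr ⟨⟨by linarith, h1⟩, hp⟩
  have hconv : (A.conv B) (Set.Ioi x) =
      (A.prod B) ((fun p : ℝ × ℝ => p.1 + p.2) ⁻¹' Set.Ioi x) := by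
    rw [Measure.conv, Measure.map_apply measurable_add measurableSet_Ioi]
  have hs3 : MeasurableSet {p : ℝ × ℝ | p.1 ∈ Set.Ioc h (x - h) ∧ x < p.1 + p.2} := by
    have : {p : ℝ × ℝ | p.1 ∈ Set.Ioc h (x - h) ∧ x < p.1 + p.2}
        = (Set.Ioc h (x - h) ×ˢ Set.univ) ∩ ((fun p : ℝ × ℝ => p.1 + p.2) ⁻¹' Set.Ioi x) := by
      ext ⟨u, v⟩; simp [and_comm]
    rw [this]
    exact (measurableSet_Ioc.prod MeasurableSet.univ).inter (measurable_add measurableSet_Ioi)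
  -- step 1 : bound the third piece by a set-lintegral against A
  have step1 : (A.prod B) {p : ℝ × ℝ | p.1 ∈ Set.Ioc h (x - h) ∧ x < p.1 + p.2} ≤
      ∫⁻ u in Set.Ioc h (x - h), ENNReal.ofReal ε * F (Set.Ioi (x - u)) ∂A := by
    rw [Measure.prod_apply hs3,
      ← lintegral_indicator (measurableSet_Ioc (a := h) (b := x - h))]
    apply lintegral_mono
    intro u
    by_cases hu : u ∈ Set.Ioc h (x - h)
    · obtain ⟨hu1, hu2⟩ := hu
      have hsec : (Prod.mk u ⁻¹' {p : ℝ × ℝ | p.1 ∈ Set.Ioc h (x - h) ∧ x < p.1 + p.2})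
          = Set.Ioi (x - u) := by
        ext v
        simp [hu1, hu2, sub_lt_iff_lt_add']
      show B (Prod.mk u ⁻¹' {p : ℝ × ℝ | p.1 ∈ Set.Ioc h (x - h) ∧ x < p.1 + p.2}) ≤ _
      rw [hsec, Set.indicator_of_mem (Set.mem_Ioc.mpr ⟨hu1, hu2⟩)]
      exact hB (x - u) (by linarith)
    · have hsec : (Prod.mk u ⁻¹' {p : ℝ × ℝ | p.1 ∈ Set.Ioc h (x - h) ∧ x < p.1 + p.2})
          = ∅ := by
        ext v
        simp only [Set.mem_preimage, Set.mem_setOf_eq, Set.mem_empty_iff_false, iff_false]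
        intro hc
        exact hu hc.1
      show B (Prod.mk u ⁻¹' {p : ℝ × ℝ | p.1 ∈ Set.Ioc h (x - h) ∧ x < p.1 + p.2}) ≤ _
      rw [hsec, Set.indicator_of_notMem hu, measure_empty]
  -- step 2 : Fubini on the set-lintegral
  have hs4 : MeasurableSet {p : ℝ × ℝ | p.1 ∈ Set.Ioc h (x - h) ∧ x - p.1 < p.2} := by
    have : {p : ℝ × ℝ | p.1 ∈ Set.Ioc h (x - h) ∧ x - p.1 < p.2}
        = (Set.Ioc h (x - h) ×ˢ Set.univ) ∩ ((fun p : ℝ × ℝ => p.1 + p.2) ⁻¹' Set.Ioi x) := by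
      ext ⟨u, v⟩
      simp [sub_lt_iff_lt_add', and_comm]
    rw [this]
    exact (measurableSet_Ioc.prod MeasurableSet.univ).inter (measurable_add measurableSet_Ioi)
  have hprod : (∫⁻ u in Set.Ioc h (x - h), F (Set.Ioi (x - u)) ∂A) =
      (A.prod F) {p : ℝ × ℝ | p.1 ∈ Set.Ioc h (x - h) ∧ x - p.1 < p.2} := by
    rw [Measure.prod_apply hs4, ← lintegral_indicator (measurableSet_Ioc (a := h) (b := x - h))]
    congr 1
    funext u
    by_cases hu : u ∈ Set.Ioc h (x - h)
    · obtain ⟨hu1, hu2⟩ := hu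
      rw [Set.indicator_of_mem (Set.mem_Ioc.mpr ⟨hu1, hu2⟩)]
      have : (Prod.mk u ⁻¹' {p : ℝ × ℝ | p.1 ∈ Set.Ioc h (x - h) ∧ x - p.1 < p.2})
          = Set.Ioi (x - u) := by
        ext v
        simp [hu1, hu2]
      rw [this]
    · rw [Set.indicator_of_notMem hu]
      have : (Prod.mk u ⁻¹' {p : ℝ × ℝ | p.1 ∈ Set.Ioc h (x - h) ∧ x - p.1 < p.2}) = ∅ := by
        ext v
        simp only [Set.mem_preimage, Set.mem_setOf_eq, Set.mem_empty_iff_false, iff_false]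
        intro hc
        exact hu hc.1
      rw [this]
      simp
  have step2 : (∫⁻ u in Set.Ioc h (x - h), F (Set.Ioi (x - u)) ∂A) ≤
      ENNReal.ofReal ε * ∫⁻ w in Set.Ioi (0:ℝ), F (Set.Ioi (x - w)) ∂F := by
    rw [hprod, Measure.prod_apply_symm hs4]
    calc (∫⁻ w, A ((fun u => (u, w)) ⁻¹' {p : ℝ × ℝ | p.1 ∈ Set.Ioc h (x - h) ∧ x - p.1 < p.2}) ∂F)
        ≤ ∫⁻ w, (Set.Ioi (0:ℝ)).indicator
            (fun w => ENNReal.ofReal ε * F (Set.Ioi (x - w))) w ∂F := by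
          apply lintegral_mono
          intro w
          show A ((fun u => (u, w)) ⁻¹' {p : ℝ × ℝ | p.1 ∈ Set.Ioc h (x - h) ∧ x - p.1 < p.2}) ≤ _
          by_cases hw : (0:ℝ) < w
          · rw [Set.indicator_of_mem (Set.mem_Ioi.mpr hw)]
            have hsub : ((fun u => (u, w)) ⁻¹' {p : ℝ × ℝ | p.1 ∈ Set.Ioc h (x - h) ∧ x - p.1 < p.2})
                ⊆ Set.Ioi (max h (x - w)) := by
              intro u hu
              simp only [Set.mem_preimage, Set.mem_setOf_eq] at hu
              exact Set.mem_Ioi.mpr (max_lt hu.1.1 (by linarith [hu.2]))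
            calc A ((fun u => (u, w)) ⁻¹' {p : ℝ × ℝ | p.1 ∈ Set.Ioc h (x - h) ∧ x - p.1 < p.2})
                ≤ A (Set.Ioi (max h (x - w))) := measure_mono hsub
              _ ≤ ENNReal.ofReal ε * F (Set.Ioi (max h (x - w))) :=
                  hA _ (le_max_left _ _)
              _ ≤ ENNReal.ofReal ε * F (Set.Ioi (x - w)) :=
                  mul_le_mul_right (measure_mono (Set.Ioi_subset_Ioi (le_max_right _ _))) _
          · rw [Set.indicator_of_notMem (fun hc => hw (Set.mem_Ioi.mp hc))]
            have : ((fun u => (u, w)) ⁻¹' {p : ℝ × ℝ | p.1 ∈ Set.Ioc h (x - h) ∧ x - p.1 < p.2})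
                = ∅ := by
              ext u
              simp only [Set.mem_preimage, Set.mem_setOf_eq, Set.mem_empty_iff_false, iff_false]
              rintro ⟨⟨hu1, hu2⟩, hu3⟩
              push_neg at hw
              linarith
            rw [this, measure_empty]
      _ = ∫⁻ w in Set.Ioi (0:ℝ), ENNReal.ofReal ε * F (Set.Ioi (x - w)) ∂F :=
          lintegral_indicator measurableSet_Ioi _
      _ = ENNReal.ofReal ε * ∫⁻ w in Set.Ioi (0:ℝ), F (Set.Ioi (x - w)) ∂F :=
          lintegral_const_mul _ (tailfunE_meas (F := F) x)
  -- combine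
  calc (A.conv B) (Set.Ioi x)
      = (A.prod B) ((fun p : ℝ × ℝ => p.1 + p.2) ⁻¹' Set.Ioi x) := hconv
    _ ≤ (A.prod B) ((Set.Ioi (x - h) ×ˢ Set.univ) ∪ (Set.univ ×ˢ Set.Ioi (x - h)) ∪
        {p : ℝ × ℝ | p.1 ∈ Set.Ioc h (x - h) ∧ x < p.1 + p.2}) := measure_mono hset
    _ ≤ (A.prod B) (Set.Ioi (x - h) ×ˢ Set.univ) + (A.prod B) (Set.univ ×ˢ Set.Ioi (x - h)) +
        (A.prod B) {p : ℝ × ℝ | p.1 ∈ Set.Ioc h (x - h) ∧ x < p.1 + p.2} :=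
        le_trans (measure_union_le _ _) (by gcongr; exact measure_union_le _ _)
    _ ≤ A (Set.Ioi (x - h)) + B (Set.Ioi (x - h)) +
        ENNReal.ofReal ε * (ENNReal.ofReal ε *
          ∫⁻ w in Set.Ioi (0:ℝ), F (Set.Ioi (x - w)) ∂F) := by
        rw [Measure.prod_prod, Measure.prod_prod]
        simp only [measure_univ, mul_one, one_mul]
        refine add_le_add le_rfl (le_trans step1 ?_)
        rw [lintegral_const_mul _ (tailfunE_meas (F := F) x)]
        exact mul_le_mul_right step2 _


/-- strip norms from the little-o statement -/
lemma littleO_tail_iff {f : ℝ → ℝ} (hf : ∀ x, 0 ≤ f x) :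
    (f =o[atTop] fun x => mtail F x) ↔
      ∀ c : ℝ, 0 < c → ∀ᶠ x in atTop, f x ≤ c * mtail F x := by
  constructor
  · intro H c hc
    rw [isLittleO_iff] at H
    filter_upwards [H hc] with x hx
    rw [Real.norm_eq_abs, Real.norm_eq_abs, abs_of_nonneg (hf x),
      abs_of_nonneg (mtail_nonneg F x)] at hx
    exact hx
  · intro H
    rw [isLittleO_iff]
    intro c hc
    filter_upwards [H c hc] with x hx
    rw [Real.norm_eq_abs, Real.norm_eq_abs, abs_of_nonneg (hf x),
      abs_of_nonneg (mtail_nonneg F x)]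
    exact hx

lemma shifted_small {A : Measure ℝ} [IsProbabilityMeasure A] (hL : memL F γ)
    (hA : (fun x => mtail A x) =o[atTop] fun x => mtail F x) (h : ℝ) {c : ℝ} (hc : 0 < c) :
    ∀ᶠ x in atTop, mtail A (x - h) ≤ c * mtail F x := by
  have hE : (0:ℝ) < Real.exp (γ * h) + 1 := by positivity
  have hc' : (0:ℝ) < c / (Real.exp (γ * h) + 1) := by positivity
  have hAe : ∀ᶠ s in atTop, mtail A s ≤ (c / (Real.exp (γ * h) + 1)) * mtail F s :=
    (littleO_tail_iff (fun x => mtail_nonneg A x)).1 hA _ hc'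
  have ht : Tendsto (fun x : ℝ => x - h) atTop atTop :=
    tendsto_atTop_add_const_right atTop (-h) tendsto_id
  filter_upwards [ht.eventually hAe, tail_shift_bound hL h] with x h1 h2
  calc mtail A (x - h) ≤ (c / (Real.exp (γ * h) + 1)) * mtail F (x - h) := h1
    _ ≤ (c / (Real.exp (γ * h) + 1)) * ((Real.exp (γ * h) + 1) * mtail F x) :=
        mul_le_mul_of_nonneg_left h2 hc'.le
    _ = c * mtail F x := by
        field_simp

lemma conv_tail_littleO (hS : memS F γ)
    (A B : Measure ℝ) [IsProbabilityMeasure A] [IsProbabilityMeasure B]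
    (hA : (fun x => mtail A x) =o[atTop] fun x => mtail F x)
    (hB : (fun x => mtail B x) =o[atTop] fun x => mtail F x) :
    (fun x => mtail (A.conv B) x) =o[atTop] fun x => mtail F x := by
  obtain ⟨D, hD⟩ := K0_bound hS
  have hD1 : (0:ℝ) < D ^ 2 + 1 := by positivity
  rw [littleO_tail_iff (fun x => mtail_nonneg _ x)]
  intro c hc
  -- choose ε
  set ε : ℝ := Real.sqrt (c / (3 * (D ^ 2 + 1))) with hεdef
  have hε : 0 < ε := Real.sqrt_pos.mpr (by positivity)
  have hε2 : ε * ε = c / (3 * (D ^ 2 + 1)) :=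
    Real.mul_self_sqrt (by positivity)
  have hεD : ε * ε * D ≤ c / 3 := by
    rw [hε2]
    rw [div_mul_eq_mul_div, div_le_div_iff₀ (by positivity) (by norm_num)]
    nlinarith [sq_nonneg (D - 1), sq_nonneg D, hc.le]
  -- thresholds
  obtain ⟨tA, htA⟩ := eventually_atTop.1
    ((littleO_tail_iff (fun x => mtail_nonneg A x)).1 hA ε hε)
  obtain ⟨tB, htB⟩ := eventually_atTop.1
    ((littleO_tail_iff (fun x => mtail_nonneg B x)).1 hB ε hε)
  set h : ℝ := max 0 (max tA tB) with hhdef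
  have hh : 0 ≤ h := le_max_left _ _
  have hAE : ∀ s ≥ h, A (Set.Ioi s) ≤ ENNReal.ofReal ε * F (Set.Ioi s) := fun s hs =>
    tailE_le hε.le (htA s (le_trans (le_trans (le_max_left _ _) (le_max_right _ _)) hs))
  have hBE : ∀ s ≥ h, B (Set.Ioi s) ≤ ENNReal.ofReal ε * F (Set.Ioi s) := fun s hs =>
    tailE_le hε.le (htB s (le_trans (le_trans (le_max_right _ _) (le_max_right _ _)) hs))
  -- the real pointwise bound
  have hreal : ∀ x : ℝ, mtail (A.conv B) x ≤ mtail A (x - h) + mtail B (x - h) +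
      ε * ε * (∫⁻ w in Set.Ioi (0:ℝ), F (Set.Ioi (x - w)) ∂F).toReal := by
    intro x
    have hpt := pointwise_bound (F := F) A B hε.le hh hAE hBE x
    have hne : A (Set.Ioi (x - h)) + B (Set.Ioi (x - h)) +
        ENNReal.ofReal ε * (ENNReal.ofReal ε *
          ∫⁻ w in Set.Ioi (0:ℝ), F (Set.Ioi (x - w)) ∂F) ≠ ⊤ := by
      refine ENNReal.add_ne_top.mpr ⟨ENNReal.add_ne_top.mpr
        ⟨measure_ne_top _ _, measure_ne_top _ _⟩, ?_⟩
      exact ENNReal.mul_ne_top ENNReal.ofReal_ne_top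
        (ENNReal.mul_ne_top ENNReal.ofReal_ne_top (lint_tail_ne_top _ _))
    have := ENNReal.toReal_mono hne hpt
    rw [ENNReal.toReal_add (ENNReal.add_ne_top.mpr
        ⟨measure_ne_top _ _, measure_ne_top _ _⟩)
        (ENNReal.mul_ne_top ENNReal.ofReal_ne_top
          (ENNReal.mul_ne_top ENNReal.ofReal_ne_top (lint_tail_ne_top _ _))),
      ENNReal.toReal_add (measure_ne_top _ _) (measure_ne_top _ _),
      ENNReal.toReal_mul, ENNReal.toReal_mul, ENNReal.toReal_ofReal hε.le] at this
    calc mtail (A.conv B) x ≤ _ := this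
      _ = mtail A (x - h) + mtail B (x - h) +
          ε * ε * (∫⁻ w in Set.Ioi (0:ℝ), F (Set.Ioi (x - w)) ∂F).toReal := by
          rw [mtail, mtail]
          ring
  -- eventual bounds
  have e1 := shifted_small hS.1 hA h (by positivity : (0:ℝ) < c / 3)
  have e2 := shifted_small hS.1 hB h (by positivity : (0:ℝ) < c / 3)
  have e3 : ∀ᶠ x in atTop,
      ε * ε * (∫⁻ w in Set.Ioi (0:ℝ), F (Set.Ioi (x - w)) ∂F).toReal ≤ (c / 3) * mtail F x := by
    filter_upwards [hD] with x hx
    have hK0 : (0:ℝ) ≤ (∫⁻ w in Set.Ioi (0:ℝ), F (Set.Ioi (x - w)) ∂F).toReal :=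
      ENNReal.toReal_nonneg
    calc ε * ε * (∫⁻ w in Set.Ioi (0:ℝ), F (Set.Ioi (x - w)) ∂F).toReal
        ≤ ε * ε * (D * mtail F x) := by
          exact mul_le_mul_of_nonneg_left hx (by positivity)
      _ = (ε * ε * D) * mtail F x := by ring
      _ ≤ (c / 3) * mtail F x := mul_le_mul_of_nonneg_right hεD (mtail_nonneg F x)
  filter_upwards [e1, e2, e3] with x h1 h2 h3
  calc mtail (A.conv B) x ≤ _ := hreal x
    _ ≤ c / 3 * mtail F x + c / 3 * mtail F x + c / 3 * mtail F x := by
        exact add_le_add (add_le_add h1 h2) h3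
    _ = c * mtail F x := by ring


end

lemma map_add_conv {Ω : Type*} [MeasurableSpace Ω] (P : Measure Ω) [IsProbabilityMeasure P]
    {f g : Ω → ℝ} (hf : Measurable f) (hg : Measurable g)
    (h : ProbabilityTheory.IndepFun f g P) :
    Measure.map (fun ω => f ω + g ω) P = (Measure.map f P).conv (Measure.map g P) := by
  have hpair : Measure.map (fun ω => (f ω, g ω)) P = (Measure.map f P).prod (Measure.map g P) :=
    (ProbabilityTheory.indepFun_iff_map_prod_eq_prod_map_map hf.aemeasurable hg.aemeasurable).1 h
  rw [Measure.conv, ← hpair, Measure.map_map measurable_add (hf.prodMk hg)]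
  rfl

theorem stmt5 {Ω : Type*} [MeasurableSpace Ω] (P : Measure Ω) [IsProbabilityMeasure P]
    (X : ℕ → Ω → ℝ) (hmeas : ∀ i, Measurable (X i))
    (hindep : ProbabilityTheory.iIndepFun X P)
    (G : Measure ℝ) (hid : ∀ i, Measure.map (X i) P = G)
    (F : Measure ℝ) [IsProbabilityMeasure F] (γ : ℝ) (hγ : 0 ≤ γ) (hS : memS F γ)
    (ho : (fun x => mtail G x) =o[atTop] fun x => mtail F x)
    (n : ℕ) (hn : 1 ≤ n) :
    (fun x => (P {ω | x < ∑ i ∈ Finset.range n, X i ω}).toReal)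
      =o[atTop] fun x => mtail F x := by
  have hGprob : IsProbabilityMeasure G := by
    rw [← hid 0]
    exact Measure.isProbabilityMeasure_map (hmeas 0).aemeasurable
  have hSmeas : ∀ m : ℕ, Measurable fun ω => ∑ i ∈ Finset.range m, X i ω := fun m =>
    Finset.measurable_sum _ fun i _ => hmeas i
  -- key induction
  have key : ∀ m : ℕ, 1 ≤ m →
      IsProbabilityMeasure (Measure.map (fun ω => ∑ i ∈ Finset.range m, X i ω) P) ∧
      ((fun x => mtail (Measure.map (fun ω => ∑ i ∈ Finset.range m, X i ω) P) x)
        =o[atTop] fun x => mtail F x) := by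
    intro m hm
    induction m, hm using Nat.le_induction with
    | base =>
      constructor
      · exact Measure.isProbabilityMeasure_map (hSmeas 1).aemeasurable
      · have : Measure.map (fun ω => ∑ i ∈ Finset.range 1, X i ω) P = G := by
          rw [← hid 0]
          congr 1
          funext ω
          simp
        rw [this]
        exact ho
    | succ m hm ih =>
      obtain ⟨ihp, iho⟩ := ih
      have hind : ProbabilityTheory.IndepFun (∑ i ∈ Finset.range m, X i) (X m) P :=
        hindep.indepFun_sum_range_succ hmeas m
      have hind' : ProbabilityTheory.IndepFun (fun ω => ∑ i ∈ Finset.range m, X i ω) (X m) P := by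
        have : (∑ i ∈ Finset.range m, X i) = fun ω => ∑ i ∈ Finset.range m, X i ω := by
          funext ω
          simp [Finset.sum_apply]
        rwa [this] at hind
      have hmap : Measure.map (fun ω => ∑ i ∈ Finset.range (m + 1), X i ω) P
          = (Measure.map (fun ω => ∑ i ∈ Finset.range m, X i ω) P).conv G := by
        rw [← hid m, ← map_add_conv P (hSmeas m) (hmeas m) hind']
        congr 1
        funext ω
        rw [Finset.sum_range_succ]
      rw [hmap]
      constructor
      · infer_instance
      · exact conv_tail_littleO hS _ _ iho ho
  obtain ⟨hp, hol⟩ := key n hn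
  have : ∀ x : ℝ, (P {ω | x < ∑ i ∈ Finset.range n, X i ω}).toReal
      = mtail (Measure.map (fun ω => ∑ i ∈ Finset.range n, X i ω) P) x := by
    intro x
    rw [mtail, Measure.map_apply (hSmeas n) measurableSet_Ioi]
    rfl
  simpa only [this] using hol
end

section
/- Let θ ∈ [-1,1] and let a, b, c, d be real numbers with a > c > 0 and b > d > 0. Then for f(u,v,s,t) = (1+θ)uv − θsv − θut + θst, the quantity K(n,θ) = ∂²f^n/∂u∂v |_{(a,b,c,d)} is strictly positive for every n ≥ 2. -/
theorem stmt9 (θ a b c d : ℝ) (hθ : θ ∈ Set.Icc (-1 : ℝ) 1)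
    (hca : c < a) (hc : 0 < c) (hdb : d < b) (hd : 0 < d) (n : ℕ) (hn : 2 ≤ n) :
    0 < deriv (fun u => deriv
        (fun v => ((1 + θ) * u * v - θ * c * v - θ * u * d + θ * c * d) ^ n) b) a := by
  obtain ⟨hθ1, hθ2⟩ := hθ
  -- inner derivative
  have h1 : ∀ u : ℝ, deriv (fun v => ((1 + θ) * u * v - θ * c * v - θ * u * d + θ * c * d) ^ n) b
      = (n : ℝ) * (((1 + θ) * b - θ * d) * u + (- θ * c * b + θ * c * d)) ^ (n - 1)
        * ((1 + θ) * u - θ * c) := by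
    intro u
    have hf : (fun v : ℝ => ((1 + θ) * u * v - θ * c * v - θ * u * d + θ * c * d) ^ n)
        = fun v => (((1 + θ) * u - θ * c) * v + (- θ * u * d + θ * c * d)) ^ n := by
      funext v; ring
    rw [hf]
    have h : HasDerivAt (fun v : ℝ => ((1 + θ) * u - θ * c) * v + (- θ * u * d + θ * c * d))
        ((1 + θ) * u - θ * c) b := by
      simpa using ((hasDerivAt_id b).const_mul ((1 + θ) * u - θ * c)).add_const
        (- θ * u * d + θ * c * d)
    have := (h.pow n).deriv
    exact this.trans (by ring)
  have h2 : (fun u => deriv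
      (fun v => ((1 + θ) * u * v - θ * c * v - θ * u * d + θ * c * d) ^ n) b)
      = fun u => (n : ℝ) * (((1 + θ) * b - θ * d) * u + (- θ * c * b + θ * c * d)) ^ (n - 1)
        * ((1 + θ) * u - θ * c) := by
    funext u; exact h1 u
  rw [h2]
  -- outer derivative
  have hA : HasDerivAt (fun u : ℝ => ((1 + θ) * b - θ * d) * u + (- θ * c * b + θ * c * d))
      ((1 + θ) * b - θ * d) a := by
    simpa using ((hasDerivAt_id a).const_mul ((1 + θ) * b - θ * d)).add_const
      (- θ * c * b + θ * c * d)
  have hB : HasDerivAt (fun u : ℝ => (1 + θ) * u - θ * c) (1 + θ) a := by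
    simpa using ((hasDerivAt_id a).const_mul (1 + θ)).sub_const (θ * c)
  have h3 : HasDerivAt (fun u => (n : ℝ) *
      (((1 + θ) * b - θ * d) * u + (- θ * c * b + θ * c * d)) ^ (n - 1)
      * ((1 + θ) * u - θ * c))
      ((n : ℝ) * ((((n - 1 : ℕ) : ℝ) *
        (((1 + θ) * b - θ * d) * a + (- θ * c * b + θ * c * d)) ^ (n - 1 - 1)
        * ((1 + θ) * b - θ * d)) * ((1 + θ) * a - θ * c)
        + (((1 + θ) * b - θ * d) * a + (- θ * c * b + θ * c * d)) ^ (n - 1) * (1 + θ))) a := by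
    have := ((hA.pow (n - 1)).mul hB).const_mul (n : ℝ)
    simp only [Pi.mul_apply, Pi.pow_apply] at this
    simp only [mul_assoc] at this ⊢
    exact this
  rw [h3.deriv]
  -- positivity
  set F : ℝ := ((1 + θ) * b - θ * d) * a + (- θ * c * b + θ * c * d) with hFdef
  have hF : 0 < F := by
    have h := mul_pos (sub_pos.2 hca) (sub_pos.2 hdb)
    nlinarith [mul_pos hc hd, mul_pos (mul_pos hc hd) h]
  have hP : 0 < (1 + θ) * a - θ * c := by nlinarith
  have hQ : 0 < (1 + θ) * b - θ * d := by nlinarith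
  have hθ0 : 0 ≤ 1 + θ := by linarith
  have hn1 : 1 ≤ (n : ℝ) - 1 := by
    have : (2 : ℝ) ≤ (n : ℝ) := by exact_mod_cast hn
    linarith
  have hcast : ((n - 1 : ℕ) : ℝ) = (n : ℝ) - 1 := by
    have : 1 ≤ n := by omega
    push_cast [this]; ring
  rw [hcast]
  have hpos1 : 0 < ((n : ℝ) - 1) * F ^ (n - 1 - 1) * ((1 + θ) * b - θ * d) := by
    have := pow_pos hF (n - 1 - 1)
    positivity
  have hnonneg : 0 ≤ F ^ (n - 1) * (1 + θ) :=
    mul_nonneg (le_of_lt (pow_pos hF (n - 1))) hθ0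
  have hnpos : 0 < (n : ℝ) := by positivity
  have := mul_pos hpos1 hP
  nlinarith [mul_pos hnpos (by linarith : (0:ℝ) < ((n : ℝ) - 1) * F ^ (n - 1 - 1) * ((1 + θ) * b - θ * d) * ((1 + θ) * a - θ * c) + F ^ (n - 1) * (1 + θ))]
end
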